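/- arXiv:1601.05618 — 5 statements merged into one kernel-verified Lean document; each statement's English description precedes it below -/
import Mathlib

section
/- If μ₁ and μ₂ are probability measures on ℤ that are Ritt (i.e. sup_{n≥1} n‖μ^{*n} − μ^{*(n+1)}‖_{ℓ¹(ℤ)} < ∞), then their convolution μ₁ * μ₂ is Ritt. -/
/-- Convolution of two summable functions on `ℤ`. -/
noncomputable def conv (f g : ℤ → ℝ) : ℤ → ℝ := fun k => ∑' j : ℤ, f j * g (k - j)

/-- `n`-fold convolution power; the `0`-th power is the Dirac mass at `0`. -/
noncomputable def convPow (f : ℤ → ℝ) : ℕ → ℤ → ℝ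
  | 0 => fun k => if k = 0 then 1 else 0
  | n + 1 => conv f (convPow f n)

/-- `ℓ¹`-norm of a (signed) measure on `ℤ`, viewed as a function. -/
noncomputable def l1norm (f : ℤ → ℝ) : ℝ := ∑' k : ℤ, |f k|

/-- `f` is a probability measure on `ℤ`. -/
def IsProbZ (f : ℤ → ℝ) : Prop := (∀ k, 0 ≤ f k) ∧ Summable f ∧ ∑' k : ℤ, f k = 1

/-- The Ritt property: `sup_{n ≥ 1} n ‖μ^{*n} − μ^{*(n+1)}‖_{ℓ¹} < ∞`. -/
def IsRitt (f : ℤ → ℝ) : Prop :=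
  ∃ C : ℝ, ∀ n : ℕ, 1 ≤ n →
    (n : ℝ) * l1norm (fun k => convPow f n k - convPow f (n + 1) k) ≤ C

section aux

/-- the shear equivalence (j, m) ↦ (j + m, j) on ℤ × ℤ -/
def shear : ℤ × ℤ ≃ ℤ × ℤ where
  toFun p := (p.1 + p.2, p.1)
  invFun p := (p.2, p.1 - p.2)
  left_inv p := by simp
  right_inv p := by simp

@[simp] lemma shear_apply (p : ℤ × ℤ) : shear p = (p.1 + p.2, p.1) := rfl

lemma summable_slice {f g : ℤ → ℝ} (hf : Summable f) (hg : Summable g) (k : ℤ) :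
    Summable fun j => f j * g (k - j) := by
  have hb : ∀ m, |g m| ≤ ∑' i, |g i| := fun m =>
    Summable.le_tsum hg.abs m (fun _ _ => abs_nonneg _)
  apply Summable.of_abs
  refine Summable.of_nonneg_of_le (fun j => abs_nonneg _) (fun j => ?_)
    (hf.abs.mul_right (∑' i, |g i|))
  rw [abs_mul]
  exact mul_le_mul_of_nonneg_left (hb _) (abs_nonneg _)

lemma summable_pair {f g : ℤ → ℝ} (hf : Summable f) (hg : Summable g) :
    Summable fun p : ℤ × ℤ => f p.2 * g (p.1 - p.2) := by
  have h : Summable fun p : ℤ × ℤ => f p.1 * g p.2 :=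
    summable_mul_of_summable_norm (R := ℝ)
      (by simpa [Real.norm_eq_abs] using hf.abs) (by simpa [Real.norm_eq_abs] using hg.abs)
  have he : ((fun p : ℤ × ℤ => f p.2 * g (p.1 - p.2)) ∘ shear)
      = fun p : ℤ × ℤ => f p.1 * g p.2 := by
    funext p; simp
  exact (Equiv.summable_iff shear).mp (he ▸ h)

lemma summable_margin {f g : ℤ → ℝ} (hf : Summable f) (hg : Summable g) :
    Summable fun k => ∑' j, |f j| * |g (k - j)| :=
  (summable_pair hf.abs hg.abs).prod

lemma abs_conv_le {f g : ℤ → ℝ} (hf : Summable f) (hg : Summable g) (k : ℤ) :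
    |conv f g k| ≤ ∑' j, |f j| * |g (k - j)| := by
  have hs : Summable fun j => ‖f j * g (k - j)‖ := by
    simpa [Real.norm_eq_abs, abs_mul] using (summable_slice hf hg k).abs
  have := norm_tsum_le_tsum_norm (f := fun j => f j * g (k - j)) hs
  simpa [Real.norm_eq_abs, abs_mul, conv] using this

lemma summable_conv {f g : ℤ → ℝ} (hf : Summable f) (hg : Summable g) :
    Summable (conv f g) :=
  Summable.of_abs <| Summable.of_nonneg_of_le (fun k => abs_nonneg _) (abs_conv_le hf hg)
    (summable_margin hf hg)

lemma l1norm_nonneg (f : ℤ → ℝ) : 0 ≤ l1norm f := tsum_nonneg fun _ => abs_nonneg _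

lemma l1norm_conv_le {f g : ℤ → ℝ} (hf : Summable f) (hg : Summable g) :
    l1norm (conv f g) ≤ l1norm f * l1norm g := by
  have habs := summable_pair hf.abs hg.abs
  have h1 : l1norm (conv f g) ≤ ∑' k, ∑' j, |f j| * |g (k - j)| := by
    rw [l1norm]
    exact Summable.tsum_le_tsum (abs_conv_le hf hg) (summable_conv hf hg).abs (summable_margin hf hg)
  have e1 : ∑' p : ℤ × ℤ, |f p.2| * |g (p.1 - p.2)| = ∑' k, ∑' j, |f j| * |g (k - j)| :=
    Summable.tsum_prod' habs habs.prod_factor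
  have e2 : ∑' p : ℤ × ℤ, |f p.1| * |g p.2| = ∑' p : ℤ × ℤ, |f p.2| * |g (p.1 - p.2)| := by
    rw [← Equiv.tsum_eq shear (fun p : ℤ × ℤ => |f p.2| * |g (p.1 - p.2)|)]
    exact tsum_congr fun p => by simp
  have e3 : (∑' k : ℤ, |f k|) * (∑' k : ℤ, |g k|) = ∑' p : ℤ × ℤ, |f p.1| * |g p.2| :=
    tsum_mul_tsum_of_summable_norm (f := fun k => |f k|) (g := fun k => |g k|)
      (by simpa [Real.norm_eq_abs] using hf.abs) (by simpa [Real.norm_eq_abs] using hg.abs)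
  calc l1norm (conv f g) ≤ ∑' k, ∑' j, |f j| * |g (k - j)| := h1
    _ = ∑' p : ℤ × ℤ, |f p.2| * |g (p.1 - p.2)| := e1.symm
    _ = ∑' p : ℤ × ℤ, |f p.1| * |g p.2| := e2.symm
    _ = (∑' k : ℤ, |f k|) * (∑' k : ℤ, |g k|) := e3.symm
    _ = l1norm f * l1norm g := rfl
end aux

section alg

lemma conv_comm (f g : ℤ → ℝ) : conv f g = conv g f := by
  funext k
  unfold conv
  rw [← Equiv.tsum_eq (Equiv.subLeft k) (fun j => g j * f (k - j))]
  exact tsum_congr fun j => by simp [Equiv.subLeft, mul_comm]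

lemma tsum_conv {f g : ℤ → ℝ} (hf : Summable f) (hg : Summable g) :
    ∑' k, conv f g k = (∑' k, f k) * (∑' k, g k) := by
  have hp := summable_pair hf hg
  have e1 : ∑' p : ℤ × ℤ, f p.2 * g (p.1 - p.2) = ∑' k, ∑' j, f j * g (k - j) :=
    Summable.tsum_prod' hp hp.prod_factor
  have e2 : ∑' p : ℤ × ℤ, f p.1 * g p.2 = ∑' p : ℤ × ℤ, f p.2 * g (p.1 - p.2) := by
    rw [← Equiv.tsum_eq shear (fun p : ℤ × ℤ => f p.2 * g (p.1 - p.2))]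
    exact tsum_congr fun p => by simp
  have e3 : (∑' k : ℤ, f k) * (∑' k : ℤ, g k) = ∑' p : ℤ × ℤ, f p.1 * g p.2 :=
    tsum_mul_tsum_of_summable_norm
      (by simpa [Real.norm_eq_abs] using hf.abs) (by simpa [Real.norm_eq_abs] using hg.abs)
  calc ∑' k, conv f g k = ∑' k, ∑' j, f j * g (k - j) := rfl
    _ = ∑' p : ℤ × ℤ, f p.2 * g (p.1 - p.2) := e1.symm
    _ = ∑' p : ℤ × ℤ, f p.1 * g p.2 := e2.symm
    _ = (∑' k : ℤ, f k) * (∑' k : ℤ, g k) := e3.symm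

lemma isProbZ_conv {f g : ℤ → ℝ} (hf : IsProbZ f) (hg : IsProbZ g) : IsProbZ (conv f g) := by
  obtain ⟨hf0, hfs, hf1⟩ := hf
  obtain ⟨hg0, hgs, hg1⟩ := hg
  refine ⟨fun k => tsum_nonneg fun j => mul_nonneg (hf0 j) (hg0 _), summable_conv hfs hgs, ?_⟩
  rw [tsum_conv hfs hgs, hf1, hg1, mul_one]

lemma isProbZ_dirac : IsProbZ (fun k : ℤ => if k = 0 then (1:ℝ) else 0) := by
  refine ⟨fun k => by positivity, ?_, ?_⟩
  · apply summable_of_ne_finset_zero (s := {0})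
    intro k hk
    simp at hk
    simp [hk]
  · rw [tsum_eq_single 0 (fun k hk => by simp [hk])]
    simp

lemma isProbZ_convPow {f : ℤ → ℝ} (hf : IsProbZ f) : ∀ n, IsProbZ (convPow f n)
  | 0 => isProbZ_dirac
  | n + 1 => isProbZ_conv hf (isProbZ_convPow hf n)

lemma l1norm_of_prob {f : ℤ → ℝ} (hf : IsProbZ f) : l1norm f = 1 := by
  obtain ⟨hf0, hfs, hf1⟩ := hf
  unfold l1norm
  rw [← hf1]
  exact tsum_congr fun k => abs_of_nonneg (hf0 k)

lemma conv_sub_right {f g g' : ℤ → ℝ} (hf : Summable f) (hg : Summable g) (hg' : Summable g') :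
    conv f (fun j => g j - g' j) = fun k => conv f g k - conv f g' k := by
  funext k
  unfold conv
  simp only [mul_sub]
  exact Summable.tsum_sub (summable_slice hf hg k) (summable_slice hf hg' k)

lemma conv_sub_left {f f' g : ℤ → ℝ} (hf : Summable f) (hf' : Summable f') (hg : Summable g) :
    conv (fun j => f j - f' j) g = fun k => conv f g k - conv f' g k := by
  funext k
  unfold conv
  simp only [sub_mul]
  exact Summable.tsum_sub (summable_slice hf hg k) (summable_slice hf' hg k)

lemma conv_assoc {f g h : ℤ → ℝ} (hf : Summable f) (hg : Summable g) (hh : Summable h) :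
    conv (conv f g) h = conv f (conv g h) := by
  funext k
  have hb : ∀ m, |h m| ≤ ∑' i, |h i| := fun m => Summable.le_tsum hh.abs m (fun _ _ => abs_nonneg _)
  -- the two product families
  set F : ℤ × ℤ → ℝ := fun p => f p.2 * g (p.1 - p.2) * h (k - p.1) with hFdef
  set G : ℤ × ℤ → ℝ := fun p => f p.1 * g p.2 * h (k - p.1 - p.2) with hGdef
  have hFG : F ∘ shear = G := by
    funext p
    simp [hFdef, hGdef, sub_sub]
  have hGsum : Summable G := by
    apply Summable.of_abs
    refine Summable.of_nonneg_of_le (fun p => abs_nonneg _) (fun p => ?_)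
      (((summable_mul_of_summable_norm (R := ℝ) (f := fun j => |f j|) (g := fun j => |g j|)
        (by simpa [Real.norm_eq_abs] using hf.abs)
        (by simpa [Real.norm_eq_abs] using hg.abs))).mul_right (∑' i, |h i|))
    simp only [hGdef, abs_mul]
    exact mul_le_mul_of_nonneg_left (hb _) (mul_nonneg (abs_nonneg _) (abs_nonneg _))
  have hFsum : Summable F := (Equiv.summable_iff shear).mp (hFG ▸ hGsum)
  calc conv (conv f g) h k
      = ∑' i, (∑' j, f j * g (i - j)) * h (k - i) := rfl
    _ = ∑' i, ∑' j, F (i, j) := by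
        refine tsum_congr fun i => ?_
        exact (tsum_mul_right (a := h (k - i)) (f := fun j => f j * g (i - j))).symm
    _ = ∑' p : ℤ × ℤ, F p := (Summable.tsum_prod' hFsum hFsum.prod_factor).symm
    _ = ∑' q : ℤ × ℤ, G q := by
        rw [← Equiv.tsum_eq shear F]
        exact tsum_congr fun q => congrFun hFG q
    _ = ∑' j, ∑' m, G (j, m) := Summable.tsum_prod' hGsum hGsum.prod_factor
    _ = ∑' j, f j * conv g h (k - j) := by
        refine tsum_congr fun j => ?_
        have : ∀ m, G (j, m) = f j * (g m * h (k - j - m)) := fun m => by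
          simp [hGdef, mul_assoc]
        rw [tsum_congr this, tsum_mul_left]
        rfl
    _ = conv f (conv g h) k := rfl

lemma summable_convPow {f : ℤ → ℝ} (hf : Summable f) : ∀ n, Summable (convPow f n)
  | 0 => isProbZ_dirac.2.1
  | n + 1 => summable_conv hf (summable_convPow hf n)

lemma conv_shuffle {a b c d : ℤ → ℝ} (ha : Summable a) (hb : Summable b) (hc : Summable c)
    (hd : Summable d) : conv (conv a b) (conv c d) = conv (conv a c) (conv b d) := by
  rw [conv_assoc ha hb (summable_conv hc hd), ← conv_assoc hb hc hd, conv_comm b c,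
    conv_assoc hc hb hd, ← conv_assoc ha hc (summable_conv hb hd)]

lemma convPow_conv {f g : ℤ → ℝ} (hf : Summable f) (hg : Summable g) :
    ∀ n, convPow (conv f g) n = conv (convPow f n) (convPow g n)
  | 0 => by
      funext k
      show (if k = 0 then (1:ℝ) else 0) = conv _ _ k
      unfold conv
      rw [tsum_eq_single 0 (fun j hj => by simp [convPow, if_neg hj])]
      simp [convPow]
  | n + 1 => by
      show conv (conv f g) (convPow (conv f g) n) = _
      rw [convPow_conv hf hg n]
      exact conv_shuffle hf hg (summable_convPow hf n) (summable_convPow hg n)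

lemma l1norm_add_le {u v : ℤ → ℝ} (hu : Summable u) (hv : Summable v) :
    l1norm (fun k => u k + v k) ≤ l1norm u + l1norm v := by
  unfold l1norm
  rw [← Summable.tsum_add hu.abs hv.abs]
  exact Summable.tsum_le_tsum (fun k => abs_add_le _ _) (hu.add hv).abs (hu.abs.add hv.abs)

end alg


theorem ritt_conv (μ₁ μ₂ : ℤ → ℝ) (h₁ : IsProbZ μ₁) (h₂ : IsProbZ μ₂)
    (hr₁ : IsRitt μ₁) (hr₂ : IsRitt μ₂) : IsRitt (conv μ₁ μ₂) := by
  obtain ⟨C₁, hC₁⟩ := hr₁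
  obtain ⟨C₂, hC₂⟩ := hr₂
  refine ⟨C₁ + C₂, fun n hn => ?_⟩
  have hs₁ : Summable μ₁ := h₁.2.1
  have hs₂ : Summable μ₂ := h₂.2.1
  have hAs : ∀ m, Summable (convPow μ₁ m) := summable_convPow hs₁
  have hBs : ∀ m, Summable (convPow μ₂ m) := summable_convPow hs₂
  have hD₁ : Summable fun k => convPow μ₁ n k - convPow μ₁ (n + 1) k :=
    (hAs n).sub (hAs (n + 1))
  have hD₂ : Summable fun k => convPow μ₂ n k - convPow μ₂ (n + 1) k :=
    (hBs n).sub (hBs (n + 1))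
  have key : (fun k => convPow (conv μ₁ μ₂) n k - convPow (conv μ₁ μ₂) (n + 1) k)
      = fun k => conv (fun j => convPow μ₁ n j - convPow μ₁ (n + 1) j) (convPow μ₂ n) k
          + conv (convPow μ₁ (n + 1)) (fun j => convPow μ₂ n j - convPow μ₂ (n + 1) j) k := by
    funext k
    rw [convPow_conv hs₁ hs₂ n, convPow_conv hs₁ hs₂ (n + 1),
        conv_sub_left (hAs n) (hAs (n + 1)) (hBs n),
        conv_sub_right (hAs (n + 1)) (hBs n) (hBs (n + 1))]
    ring
  rw [key]
  have l1 : l1norm (fun k =>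
        conv (fun j => convPow μ₁ n j - convPow μ₁ (n + 1) j) (convPow μ₂ n) k
          + conv (convPow μ₁ (n + 1)) (fun j => convPow μ₂ n j - convPow μ₂ (n + 1) j) k)
      ≤ l1norm (conv (fun j => convPow μ₁ n j - convPow μ₁ (n + 1) j) (convPow μ₂ n))
        + l1norm (conv (convPow μ₁ (n + 1)) (fun j => convPow μ₂ n j - convPow μ₂ (n + 1) j)) :=
    l1norm_add_le (summable_conv hD₁ (hBs n)) (summable_conv (hAs (n + 1)) hD₂)
  have b1 : l1norm (conv (fun j => convPow μ₁ n j - convPow μ₁ (n + 1) j) (convPow μ₂ n))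
      ≤ l1norm (fun k => convPow μ₁ n k - convPow μ₁ (n + 1) k) := by
    have := l1norm_conv_le hD₁ (hBs n)
    rwa [l1norm_of_prob (isProbZ_convPow h₂ n), mul_one] at this
  have b2 : l1norm (conv (convPow μ₁ (n + 1)) (fun j => convPow μ₂ n j - convPow μ₂ (n + 1) j))
      ≤ l1norm (fun k => convPow μ₂ n k - convPow μ₂ (n + 1) k) := by
    have := l1norm_conv_le (hAs (n + 1)) hD₂
    rwa [l1norm_of_prob (isProbZ_convPow h₁ (n + 1)), one_mul] at this
  have hn0 : (0:ℝ) ≤ (n : ℝ) := Nat.cast_nonneg n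
  calc (n : ℝ) * l1norm (fun k =>
        conv (fun j => convPow μ₁ n j - convPow μ₁ (n + 1) j) (convPow μ₂ n) k
          + conv (convPow μ₁ (n + 1)) (fun j => convPow μ₂ n j - convPow μ₂ (n + 1) j) k)
      ≤ (n : ℝ) * (l1norm (fun k => convPow μ₁ n k - convPow μ₁ (n + 1) k)
          + l1norm (fun k => convPow μ₂ n k - convPow μ₂ (n + 1) k)) := by
        apply mul_le_mul_of_nonneg_left _ hn0
        linarith
    _ = (n : ℝ) * l1norm (fun k => convPow μ₁ n k - convPow μ₁ (n + 1) k)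
          + (n : ℝ) * l1norm (fun k => convPow μ₂ n k - convPow μ₂ (n + 1) k) := by ring
    _ ≤ C₁ + C₂ := add_le_add (hC₁ n hn) (hC₂ n hn)
end

section
/- A sequence (μₙ)_{n∈ℕ} of reals is completely monotone (i.e. for every m ≥ 0, the iterated difference Δ^m μₙ ≥ 0 for all n, where Δtₙ = tₙ − tₙ₊₁) if and only if there exists a finite positive Borel measure ν on [0,1] with μₙ = ∫₀¹ tⁿ ν(dt) for every n ∈ ℕ. -/
/-!
If `t` is completely monotone, the weights `C(k, j) Δ^(k-j) t_j` (`j ≤ k`) are nonnegative and sum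
to `t 0` (expand `1 = (E + Δ)^k`, `E` the shift), so they define a measure `ν_k` carried by the grid
`{j / k}`. Since `t n` is the same weighted sum of `C(j, n) / C(k, n)`, which lies within `n² / k`
of `(j / k)^n` uniformly in `j`, the `n`-th moment of `ν_k` tends to `t n`. The `ν_k` lie in the
weakly compact set of measures on `[0, 1]` of mass at most `t 0`, so the moments of a cluster point
are the `t n`. Conversely, `Δ^m t_n = ∫ x^n (1 - x)^m dν ≥ 0`.
-/

open MeasureTheory Finset Filter Topology BoundedContinuousFunction

/-- Forward difference operator `(Δt)ₙ = tₙ − tₙ₊₁`. -/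
def fdiff (t : ℕ → ℝ) : ℕ → ℝ := fun n => t n - t (n + 1)

def IsCompletelyMonotone (t : ℕ → ℝ) : Prop := ∀ m n : ℕ, 0 ≤ fdiff^[m] t n

theorem MapClusterPt.eq_of_tendsto {X α : Type*} [TopologicalSpace X] [T2Space X] {F : Filter α}
    {u : α → X} {x y : X} (hx : MapClusterPt x F u) (hy : Tendsto u F (𝓝 y)) : x = y :=
  eq_of_nhds_neBot (hx.neBot.mono (inf_le_inf_left _ hy))

lemma fdiff_iterate_succ_apply (t : ℕ → ℝ) (m n : ℕ) :
    fdiff^[m + 1] t n = fdiff^[m] t n - fdiff^[m] t (n + 1) := by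
  rw [Function.iterate_succ_apply']
  rfl

lemma sum_choose_mul_fdiff_iterate (k : ℕ) (t : ℕ → ℝ) (n : ℕ) :
    ∑ j ∈ range (k + 1), (k.choose j : ℝ) * fdiff^[k - j] t (j + n) = t n := by
  induction k generalizing n with
  | zero => simp
  | succ k ih =>
    rw [sum_choose_succ_mul (fun j e => fdiff^[e] t (j + n))]
    have hsucc : ∀ j ∈ range (k + 1),
        (k.choose j : ℝ) * fdiff^[k + 1 - j] t (j + n) =
          k.choose j * (fdiff^[k - j] t (j + n) - fdiff^[k - j] t (j + (n + 1))) := by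
      intro j hj
      rw [Nat.sub_add_comm (Nat.lt_succ_iff.1 (mem_range.1 hj)), fdiff_iterate_succ_apply,
        add_assoc]
    simp only [sum_congr rfl hsucc, mul_sub, sum_sub_distrib, ih, add_right_comm _ 1 n, ← add_assoc]
    ring

lemma sum_choose_mul_choose_mul_fdiff_iterate (t : ℕ → ℝ) {k n : ℕ} (hnk : n ≤ k) :
    ∑ j ∈ range (k + 1), (k.choose j : ℝ) * j.choose n * fdiff^[k - j] t j =
      k.choose n * t n := by
  have hsplit : k + 1 = n + (k - n + 1) := by omega
  rw [hsplit, sum_range_add, sum_eq_zero fun j hj => by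
    rw [Nat.choose_eq_zero_of_lt (mem_range.1 hj)]; simp, zero_add,
    ← sum_choose_mul_fdiff_iterate (k - n) t n, mul_sum]
  refine sum_congr rfl fun i _ => ?_
  have hchoose : (k.choose (n + i) : ℝ) * (n + i).choose n = k.choose n * (k - n).choose i := by
    exact_mod_cast (Nat.choose_mul (Nat.le_add_right n i)).trans (by rw [Nat.add_sub_cancel_left])
  rw [hchoose, Nat.sub_add_eq, add_comm n i, mul_assoc]

lemma choose_div_choose_eq_prod {j k n : ℕ} (hnj : n ≤ j) (hjk : j ≤ k) :
    (j.choose n : ℝ) / k.choose n = ∏ i ∈ range n, ((j : ℝ) - i) / (k - i) := by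
  have hdesc : ∀ l, n ≤ l → (l.descFactorial n : ℝ) = ∏ i ∈ range n, ((l : ℝ) - i) := by
    intro l hl
    rw [Nat.descFactorial_eq_prod_range, Nat.cast_prod]
    exact prod_congr rfl fun i hi => Nat.cast_sub (by have := mem_range.1 hi; omega)
  have hfac : (n.factorial : ℝ) ≠ 0 := by positivity
  rw [prod_div_distrib, ← hdesc j hnj, ← hdesc k (hnj.trans hjk),
    Nat.descFactorial_eq_factorial_mul_choose, Nat.descFactorial_eq_factorial_mul_choose,
    Nat.cast_mul, Nat.cast_mul, mul_div_mul_left _ _ hfac]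

-- `j - n` is truncated: for `j < n` the lower bound is `0 ^ n = 0`.
lemma choose_div_choose_mem_Icc {j k n : ℕ} (hjk : j ≤ k) :
    (j.choose n : ℝ) / k.choose n ∈ Set.Icc ((((j - n : ℕ) : ℝ) / k) ^ n) (((j : ℝ) / k) ^ n) := by
  rcases lt_or_ge j n with hjn | hnj
  · rw [Nat.choose_eq_zero_of_lt hjn, Nat.sub_eq_zero_of_le hjn.le]
    simp only [Nat.cast_zero, zero_div, zero_pow (Nat.ne_zero_of_lt hjn), Set.left_mem_Icc]
    positivity
  rw [choose_div_choose_eq_prod hnj hjk, Nat.cast_sub hnj]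
  have hnj' : (n : ℝ) ≤ j := by exact_mod_cast hnj
  have hjk' : (j : ℝ) ≤ k := by exact_mod_cast hjk
  have hlow : 0 ≤ ((j : ℝ) - n) / k := div_nonneg (sub_nonneg.2 hnj') k.cast_nonneg
  have hfactor : ∀ i ∈ range n,
      ((j : ℝ) - i) / (k - i) ∈ Set.Icc (((j : ℝ) - n) / k) ((j : ℝ) / k) := by
    intro i hi
    have hin : (i : ℝ) < n := by exact_mod_cast mem_range.1 hi
    have hki : 0 < (k : ℝ) - i := by linarith
    constructor
    · rw [div_le_div_iff₀ (by linarith) hki]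
      nlinarith
    · rw [div_le_div_iff₀ hki (by linarith)]
      nlinarith
  constructor
  · simpa only [prod_const, card_range] using
      prod_le_prod (fun _ _ => hlow) fun i hi => (hfactor i hi).1
  · simpa only [prod_const, card_range] using
      prod_le_prod (fun i hi => hlow.trans (hfactor i hi).1) fun i hi => (hfactor i hi).2

lemma abs_div_pow_sub_choose_div_choose_le {j k n : ℕ} (hjk : j ≤ k) :
    |((j : ℝ) / k) ^ n - j.choose n / k.choose n| ≤ n ^ 2 / k := by
  obtain ⟨hlow, hupp⟩ := choose_div_choose_mem_Icc (n := n) hjk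
  set a : ℝ := ((j - n : ℕ) : ℝ) / k
  set b : ℝ := (j : ℝ) / k
  have ha : 0 ≤ a := by positivity
  have hab : a ≤ b := div_le_div_of_nonneg_right (by exact_mod_cast j.sub_le n) k.cast_nonneg
  have hb : b ≤ 1 := div_le_one_of_le₀ (by exact_mod_cast hjk) k.cast_nonneg
  have hgap : b - a ≤ n / k := by
    rw [← sub_div]
    gcongr
    have : (j : ℝ) ≤ ((j - n : ℕ) : ℝ) + n := by exact_mod_cast le_tsub_add
    linarith
  calc |b ^ n - j.choose n / k.choose n|
      ≤ |b ^ n - a ^ n| := by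
        rw [abs_of_nonneg (sub_nonneg.2 hupp), abs_of_nonneg (by linarith)]
        linarith
    _ ≤ |b - a| * n * max |b| |a| ^ (n - 1) := abs_pow_sub_pow_le b a n
    _ ≤ (n / k) * n * 1 := by
        rw [abs_of_nonneg (sub_nonneg.2 hab), abs_of_nonneg (ha.trans hab), abs_of_nonneg ha,
          max_eq_left hab]
        gcongr
        exact pow_le_one₀ (ha.trans hab) hb
    _ = n ^ 2 / k := by ring

lemma div_mem_Icc_zero_one {j k : ℕ} (hjk : j ≤ k) : (j : ℝ) / k ∈ Set.Icc 0 1 :=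
  ⟨by positivity, div_le_one_of_le₀ (by exact_mod_cast hjk) k.cast_nonneg⟩

noncomputable def momentWeight (t : ℕ → ℝ) (k j : ℕ) : ℝ := k.choose j * fdiff^[k - j] t j

section ApproximatingMeasures

variable {t : ℕ → ℝ}

lemma momentWeight_nonneg (ht : IsCompletelyMonotone t) (k j : ℕ) : 0 ≤ momentWeight t k j :=
  mul_nonneg (Nat.cast_nonneg _) (ht _ _)

lemma sum_momentWeight (t : ℕ → ℝ) (k : ℕ) : ∑ j ∈ range (k + 1), momentWeight t k j = t 0 := by
  simpa [momentWeight] using sum_choose_mul_fdiff_iterate k t 0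

lemma sum_momentWeight_mul_choose_div_choose (t : ℕ → ℝ) {k n : ℕ} (hnk : n ≤ k) :
    ∑ j ∈ range (k + 1), momentWeight t k j * (j.choose n / k.choose n) = t n := by
  have hchoose : (k.choose n : ℝ) ≠ 0 := by exact_mod_cast (Nat.choose_pos hnk).ne'
  rw [eq_comm, ← mul_div_cancel_left₀ (t n) hchoose,
    ← sum_choose_mul_choose_mul_fdiff_iterate t hnk, sum_div]
  refine sum_congr rfl fun j _ => ?_
  rw [momentWeight]
  ring

lemma abs_sum_momentWeight_mul_pow_sub_le (ht : IsCompletelyMonotone t) {k n : ℕ} (hnk : n ≤ k) :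
    |∑ j ∈ range (k + 1), momentWeight t k j * ((j : ℝ) / k) ^ n - t n| ≤ t 0 * (n ^ 2 / k) := by
  conv_lhs => rw [← sum_momentWeight_mul_choose_div_choose t hnk]
  rw [← sum_sub_distrib, ← sum_momentWeight t k, sum_mul]
  refine (abs_sum_le_sum_abs _ _).trans (sum_le_sum fun j hj => ?_)
  rw [← mul_sub, abs_mul, abs_of_nonneg (momentWeight_nonneg ht k j)]
  exact mul_le_mul_of_nonneg_left
    (abs_div_pow_sub_choose_div_choose_le (Nat.lt_succ_iff.1 (mem_range.1 hj)))
    (momentWeight_nonneg ht k j)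

lemma tendsto_sum_momentWeight_mul_pow (ht : IsCompletelyMonotone t) (n : ℕ) :
    Tendsto (fun k : ℕ => ∑ j ∈ range (k + 1), momentWeight t k j * ((j : ℝ) / k) ^ n) atTop
      (𝓝 (t n)) := by
  have hbound : Tendsto (fun k : ℕ => t 0 * (n ^ 2 / k)) atTop (𝓝 0) := by
    simpa using (tendsto_const_div_atTop_nhds_zero_nat ((n : ℝ) ^ 2)).const_mul (t 0)
  rw [tendsto_iff_dist_tendsto_zero]
  refine squeeze_zero' (Eventually.of_forall fun _ => dist_nonneg) ?_ hbound
  filter_upwards [eventually_ge_atTop n] with k hk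
  exact abs_sum_momentWeight_mul_pow_sub_le ht hk

noncomputable def momentMeasure (t : ℕ → ℝ) (k : ℕ) : FiniteMeasure ℝ :=
  ⟨∑ j ∈ range (k + 1), (momentWeight t k j).toNNReal • Measure.dirac ((j : ℝ) / k),
    inferInstance⟩

lemma momentMeasure_compl_Icc (t : ℕ → ℝ) (k : ℕ) : momentMeasure t k (Set.Icc 0 1)ᶜ = 0 := by
  rw [FiniteMeasure.null_iff_toMeasure_null]
  simp only [momentMeasure, FiniteMeasure.toMeasure_mk, Measure.coe_finsetSum, Finset.sum_apply,
    Measure.smul_apply]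
  refine sum_eq_zero fun j hj => ?_
  rw [Measure.dirac_apply' _ measurableSet_Icc.compl, Set.indicator_of_notMem
    (Set.notMem_compl_iff.2 (div_mem_Icc_zero_one (Nat.lt_succ_iff.1 (mem_range.1 hj)))),
    smul_zero]

lemma integral_momentMeasure (ht : IsCompletelyMonotone t) (k : ℕ) (f : ℝ → ℝ) :
    ∫ x, f x ∂(momentMeasure t k) = ∑ j ∈ range (k + 1), momentWeight t k j * f (j / k) := by
  rw [momentMeasure, FiniteMeasure.toMeasure_mk, integral_finsetSum_measure fun j _ =>
    (integrable_dirac enorm_lt_top).smul_measure_nnreal]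
  refine sum_congr rfl fun j _ => ?_
  rw [integral_smul_nnreal_measure, integral_dirac, NNReal.smul_def, smul_eq_mul,
    Real.coe_toNNReal _ (momentWeight_nonneg ht k j)]

lemma momentMeasure_mass (ht : IsCompletelyMonotone t) (k : ℕ) :
    (momentMeasure t k).mass = (t 0).toNNReal := by
  have h := integral_momentMeasure ht k 1
  simp only [Pi.one_apply, mul_one, sum_momentWeight, integral_const, smul_eq_mul] at h
  rw [← h, measureReal_def, ← FiniteMeasure.ennreal_mass, ENNReal.coe_toReal, Real.toNNReal_coe]

end ApproximatingMeasures

noncomputable def clampedPow (n : ℕ) : ℝ →ᵇ ℝ :=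
  .mkOfBound ⟨fun x => ((Set.projIcc 0 1 zero_le_one x ^ n : unitInterval) : ℝ), by fun_prop⟩ 1
    fun x y => Real.dist_le_of_mem_Icc_01 (Set.projIcc 0 1 zero_le_one x ^ n).2
      (Set.projIcc 0 1 zero_le_one y ^ n).2

lemma clampedPow_apply_of_mem {x : ℝ} (hx : x ∈ Set.Icc 0 1) (n : ℕ) : clampedPow n x = x ^ n := by
  simp [clampedPow, Set.projIcc_of_mem _ hx]

lemma setIntegral_Icc_pow_eq_integral_clampedPow {ν : Measure ℝ} (hν : ν (Set.Icc 0 1)ᶜ = 0)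
    (n : ℕ) : ∫ x in Set.Icc 0 1, x ^ n ∂ν = ∫ x, clampedPow n x ∂ν := by
  have hae : ∀ᵐ x ∂ν, x ∈ Set.Icc (0 : ℝ) 1 := ae_iff.2 hν
  rw [Measure.restrict_eq_self_of_ae_mem hae]
  exact integral_congr_ae (hae.mono fun x hx => (clampedPow_apply_of_mem hx n).symm)

theorem IsCompletelyMonotone.exists_finiteMeasure_moments {t : ℕ → ℝ}
    (ht : IsCompletelyMonotone t) :
    ∃ ν : Measure ℝ, IsFiniteMeasure ν ∧ ν (Set.Icc 0 1)ᶜ = 0 ∧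
      ∀ n : ℕ, t n = ∫ x in Set.Icc 0 1, x ^ n ∂ν := by
  have hcompact := isCompact_setOfPred_finiteMeasure_le_of_isCompact (t 0).toNNReal
    (isCompact_Icc (a := (0 : ℝ)) (b := 1))
  obtain ⟨ν, ⟨-, hν⟩, hcluster⟩ := hcompact.exists_mapClusterPt (f := atTop) (u := momentMeasure t)
    (tendsto_principal.2 (Eventually.of_forall fun k =>
      ⟨(momentMeasure_mass ht k).le, momentMeasure_compl_Icc t k⟩))
  have hν' : (ν : Measure ℝ) (Set.Icc 0 1)ᶜ = 0 := (FiniteMeasure.null_iff_toMeasure_null _ _).1 hν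
  refine ⟨ν, inferInstance, hν', fun n => ?_⟩
  have hmoment : Tendsto (fun k => ∫ x, clampedPow n x ∂(momentMeasure t k)) atTop (𝓝 (t n)) := by
    refine (tendsto_sum_momentWeight_mul_pow ht n).congr fun k => ?_
    rw [integral_momentMeasure ht]
    exact sum_congr rfl fun j hj => by
      rw [clampedPow_apply_of_mem (div_mem_Icc_zero_one (Nat.lt_succ_iff.1 (mem_range.1 hj)))]
  rw [setIntegral_Icc_pow_eq_integral_clampedPow hν']
  exact ((hcluster.tendsto_comp ((FiniteMeasure.continuous_integral_boundedContinuousFunction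
    (clampedPow n)).tendsto ν)).eq_of_tendsto hmoment).symm

lemma fdiff_iterate_eq_setIntegral {t : ℕ → ℝ} {ν : Measure ℝ} [IsLocallyFiniteMeasure ν]
    (h : ∀ n, t n = ∫ x in Set.Icc 0 1, x ^ n ∂ν) (m n : ℕ) :
    fdiff^[m] t n = ∫ x in Set.Icc 0 1, x ^ n * (1 - x) ^ m ∂ν := by
  induction m generalizing n with
  | zero => simpa using h n
  | succ m ih =>
    rw [fdiff_iterate_succ_apply, ih, ih, ← integral_sub (by fun_prop : Continuous fun x : ℝ =>
      x ^ n * (1 - x) ^ m).integrableOn_Icc (by fun_prop : Continuous fun x : ℝ =>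
      x ^ (n + 1) * (1 - x) ^ m).integrableOn_Icc]
    exact setIntegral_congr_fun measurableSet_Icc fun x _ => by ring

lemma isCompletelyMonotone_of_eq_setIntegral_pow {t : ℕ → ℝ} (ν : Measure ℝ)
    [IsLocallyFiniteMeasure ν] (h : ∀ n, t n = ∫ x in Set.Icc 0 1, x ^ n ∂ν) :
    IsCompletelyMonotone t := fun m n => by
  rw [fdiff_iterate_eq_setIntegral h]
  exact setIntegral_nonneg measurableSet_Icc fun x hx =>
    mul_nonneg (pow_nonneg hx.1 n) (pow_nonneg (sub_nonneg.2 hx.2) m)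

/-- Hausdorff's moment theorem: a sequence is completely monotone iff it is the
moment sequence of a finite positive measure on `[0,1]`. -/
theorem hausdorff_moment (μ : ℕ → ℝ) :
    (∀ m n : ℕ, 0 ≤ (fdiff^[m] μ) n) ↔
      ∃ ν : Measure ℝ, IsFiniteMeasure ν ∧ ν (Set.Icc (0 : ℝ) 1)ᶜ = 0 ∧
        ∀ n : ℕ, μ n = ∫ t in Set.Icc (0 : ℝ) 1, t ^ n ∂ν := by
  refine ⟨IsCompletelyMonotone.exists_finiteMeasure_moments, ?_⟩
  rintro ⟨ν, _, -, hμ⟩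
  exact isCompletelyMonotone_of_eq_setIntegral_pow ν hμ
end

section
/- For every integer k ≥ 1 and all nonnegative reals α, α₁, …, α_k, the function x ↦ 1/(x^α L₁(x)^{α₁} ⋯ L_k(x)^{α_k}) is completely monotone on (0,∞), where L₁(x) = log(1+x) and L_{j+1}(x) = L₁(L_j(x)). -/
open Set

def CompletelyMonotoneOn (f : ℝ → ℝ) : Prop :=
  ContDiffOn ℝ (⊤ : ℕ∞) f (Ioi 0) ∧
    ∀ m : ℕ, ∀ x ∈ Ioi (0 : ℝ), 0 ≤ (-1 : ℝ) ^ m * iteratedDeriv m f x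

/-- `L(x) = log(1+x)`; the iterated logarithm `L_j` is `L^[j]`. -/
noncomputable def Lfun : ℝ → ℝ := fun x => Real.log (1 + x)

namespace CMaux

notation "S" => Ioi (0:ℝ)

lemma hSo : IsOpen S := isOpen_Ioi
lemma hSu : UniqueDiffOn ℝ S := hSo.uniqueDiffOn

lemma itdW_eq (f : ℝ → ℝ) (n : ℕ) {x : ℝ} (hx : x ∈ S) :
    iteratedDerivWithin n f S x = iteratedDeriv n f x := by
  rw [iteratedDerivWithin_eq_iteratedFDerivWithin, iteratedDeriv_eq_iteratedFDeriv,
    iteratedFDerivWithin_of_isOpen n hSo hx]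

/-- congruence for CM on the open set -/
lemma CM_congr {f g : ℝ → ℝ} (h : Set.EqOn f g S) (hf : CompletelyMonotoneOn f) :
    CompletelyMonotoneOn g := by
  refine ⟨hf.1.congr h.symm, fun m x hx => ?_⟩
  rw [← h.iteratedDeriv_of_isOpen hSo m hx]
  exact hf.2 m x hx

lemma itd_add {f g : ℝ → ℝ} (hf : ContDiffOn ℝ (⊤ : ℕ∞) f S) (hg : ContDiffOn ℝ (⊤ : ℕ∞) g S)
    (n : ℕ) {x : ℝ} (hx : x ∈ S) :
    iteratedDeriv n (fun y => f y + g y) x = iteratedDeriv n f x + iteratedDeriv n g x := by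
  rw [← itdW_eq _ n hx, ← itdW_eq f n hx, ← itdW_eq g n hx]
  exact iteratedDerivWithin_add hx hSu ((hf x hx).of_le (by exact_mod_cast le_top)) ((hg x hx).of_le (by exact_mod_cast le_top))

lemma itd_neg (f : ℝ → ℝ) (n : ℕ) (x : ℝ) :
    iteratedDeriv n (fun y => -f y) x = -iteratedDeriv n f x := by
  have := iteratedDeriv_neg (𝕜 := ℝ) (F := ℝ) n f x  -- check name
  simpa using this

/-- derivative step: deriv of CM is minus-CM -/
lemma CM_neg_deriv {f : ℝ → ℝ} (hf : CompletelyMonotoneOn f) :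
    CompletelyMonotoneOn (fun x => -deriv f x) := by
  have hd : ContDiffOn ℝ (⊤ : ℕ∞) (fun x => deriv f x) S := by
    have := hf.1.derivWithin hSu (m := (⊤ : ℕ∞)) (by simp)
    refine this.congr fun x hx => (derivWithin_of_isOpen hSo hx).symm
  refine ⟨hd.neg, fun m x hx => ?_⟩
  rw [itd_neg]
  have h1 : iteratedDeriv m (deriv f) x = iteratedDeriv (m+1) f x := by
    rw [iteratedDeriv_succ']
  have := hf.2 (m+1) x hx
  rw [pow_succ] at this
  rw [h1]
  ring_nf at this ⊢
  linarith

lemma smooth_deriv {f : ℝ → ℝ} (hf : ContDiffOn ℝ (⊤ : ℕ∞) f S) :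
    ContDiffOn ℝ (⊤ : ℕ∞) (deriv f) S := by
  have := hf.derivWithin hSu (m := (⊤ : ℕ∞)) (by simp)
  exact this.congr fun x hx => (derivWithin_of_isOpen hSo hx).symm

lemma neg_deriv_sign {f : ℝ → ℝ} (m : ℕ)
    (h : ∀ x ∈ S, 0 ≤ (-1:ℝ)^(m+1) * iteratedDeriv (m+1) f x) :
    ∀ x ∈ S, 0 ≤ (-1:ℝ)^m * iteratedDeriv m (fun y => -deriv f y) x := by
  intro x hx
  have h1 : iteratedDeriv m (fun y => -deriv f y) x = -iteratedDeriv (m+1) f x := by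
    rw [itd_neg, ← iteratedDeriv_succ']
  have h2 := h x hx
  rw [pow_succ] at h2
  rw [h1]
  ring_nf at h2 ⊢
  linarith

/-- sign of iterated derivatives of products, up to order n -/
lemma mul_sign : ∀ n : ℕ, ∀ f g : ℝ → ℝ, ContDiffOn ℝ (⊤ : ℕ∞) f S → ContDiffOn ℝ (⊤ : ℕ∞) g S →
    (∀ m ≤ n, ∀ x ∈ S, 0 ≤ (-1:ℝ)^m * iteratedDeriv m f x) →
    (∀ m ≤ n, ∀ x ∈ S, 0 ≤ (-1:ℝ)^m * iteratedDeriv m g x) →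
    ∀ x ∈ S, 0 ≤ (-1:ℝ)^n * iteratedDeriv n (fun y => f y * g y) x := by
  intro n
  induction n with
  | zero =>
    intro f g _ _ hf hg x hx
    have h1 := hf 0 le_rfl x hx
    have h2 := hg 0 le_rfl x hx
    simp only [iteratedDeriv_zero, pow_zero, one_mul] at h1 h2 ⊢
    exact mul_nonneg h1 h2
  | succ n IH =>
    intro f g hfS hgS hf hg x hx
    have hfd : ContDiffOn ℝ (⊤ : ℕ∞) (fun y => -deriv f y) S := (smooth_deriv hfS).neg
    have hgd : ContDiffOn ℝ (⊤ : ℕ∞) (fun y => -deriv g y) S := (smooth_deriv hgS).neg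
    have key : Set.EqOn (deriv (fun y => f y * g y))
        (fun y => -((-deriv f y) * g y) + -(f y * (-deriv g y))) S := by
      intro y hy
      have hfy : DifferentiableAt ℝ f y :=
        (hfS.differentiableOn (by simp)).differentiableAt (hSo.mem_nhds hy)
      have hgy : DifferentiableAt ℝ g y :=
        (hgS.differentiableOn (by simp)).differentiableAt (hSo.mem_nhds hy)
      rw [show (fun y => f y * g y) = f * g from rfl, deriv_mul hfy hgy]
      ring
    have heq : iteratedDeriv (n+1) (fun y => f y * g y) x =
        -(iteratedDeriv n (fun y => (-deriv f y) * g y) x) +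
        -(iteratedDeriv n (fun y => f y * (-deriv g y)) x) := by
      rw [iteratedDeriv_succ', key.iteratedDeriv_of_isOpen hSo n hx,
        itd_add ((hfd.mul hgS).neg) ((hfS.mul hgd).neg) n hx, itd_neg, itd_neg]
    have hA := IH (fun y => -deriv f y) g hfd hgS
      (fun m hm => neg_deriv_sign m (hf (m+1) (by omega)))
      (fun m hm => hg m (by omega)) x hx
    have hB := IH f (fun y => -deriv g y) hfS hgd
      (fun m hm => hf m (by omega))
      (fun m hm => neg_deriv_sign m (hg (m+1) (by omega))) x hx
    rw [heq, pow_succ]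
    set A := iteratedDeriv n (fun y => -deriv f y * g y) x with hAdef
    set B := iteratedDeriv n (fun y => f y * -deriv g y) x with hBdef
    set e := (-1:ℝ)^n with hedef
    ring_nf
    ring_nf at hA hB
    linarith

lemma CM_mul {f g : ℝ → ℝ} (hf : CompletelyMonotoneOn f) (hg : CompletelyMonotoneOn g) :
    CompletelyMonotoneOn (fun x => f x * g x) :=
  ⟨hf.1.mul hg.1, fun m x hx => mul_sign m f g hf.1 hg.1
    (fun i _ => hf.2 i) (fun i _ => hg.2 i) x hx⟩

structure Bernstein (g : ℝ → ℝ) : Prop where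
  smooth : ContDiffOn ℝ (⊤ : ℕ∞) g S
  maps : ∀ x ∈ S, g x ∈ S
  derivCM : CompletelyMonotoneOn (deriv g)

lemma comp_smooth {f g : ℝ → ℝ} (hf : ContDiffOn ℝ (⊤ : ℕ∞) f S) (hg : Bernstein g) :
    ContDiffOn ℝ (⊤ : ℕ∞) (fun x => f (g x)) S :=
  hf.comp hg.smooth fun x hx => hg.maps x hx

lemma CM_comp {f g : ℝ → ℝ} (hf : CompletelyMonotoneOn f) (hg : Bernstein g) :
    CompletelyMonotoneOn (fun x => f (g x)) := by
  have main : ∀ n : ℕ, ∀ f : ℝ → ℝ, CompletelyMonotoneOn f →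
      ∀ x ∈ S, 0 ≤ (-1:ℝ)^n * iteratedDeriv n (fun y => f (g y)) x := by
    intro n
    induction n using Nat.strong_induction_on with
    | _ n IH =>
      match n with
      | 0 =>
        intro f hf x hx
        have := hf.2 0 (g x) (hg.maps x hx)
        simpa using this
      | (n+1) =>
        intro f hf x hx
        have hu : CompletelyMonotoneOn (fun y => -deriv f y) := CM_neg_deriv hf
        have key : Set.EqOn (deriv (fun y => f (g y)))
            (fun y => -((-deriv f (g y)) * deriv g y)) S := by
          intro y hy
          have hfy : DifferentiableAt ℝ f (g y) :=
            (hf.1.differentiableOn (by simp)).differentiableAt (hSo.mem_nhds (hg.maps y hy))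
          have hgy : DifferentiableAt ℝ g y :=
            (hg.smooth.differentiableOn (by simp)).differentiableAt (hSo.mem_nhds hy)
          have := (hfy.hasDerivAt.comp y hgy.hasDerivAt).deriv
          simp only [Function.comp_def] at this
          rw [this]
          ring
        have heq : iteratedDeriv (n+1) (fun y => f (g y)) x =
            -(iteratedDeriv n (fun y => (-deriv f (g y)) * deriv g y) x) := by
          rw [iteratedDeriv_succ', key.iteratedDeriv_of_isOpen hSo n hx, itd_neg]
        have hms := mul_sign n (fun y => -deriv f (g y)) (deriv g)
          (comp_smooth (f := fun y => -deriv f y) hu.1 hg) hg.derivCM.1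
          (fun m hm => IH m (by omega) (fun y => -deriv f y) hu)
          (fun m hm => hg.derivCM.2 m) x hx
        rw [heq, pow_succ]
        set A := iteratedDeriv n (fun y => -deriv f (g y) * deriv g y) x
        set e := (-1:ℝ)^n
        ring_nf
        ring_nf at hms
        linarith
  exact ⟨comp_smooth hf.1 hg, fun m x hx => main m f hf x hx⟩

lemma Bernstein_comp {g h : ℝ → ℝ} (hg : Bernstein g) (hh : Bernstein h) :
    Bernstein (fun x => g (h x)) := by
  refine ⟨comp_smooth hg.smooth hh, fun x hx => hg.maps _ (hh.maps x hx), ?_⟩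
  have hprod : CompletelyMonotoneOn (fun x => (deriv g (h x)) * deriv h x) :=
    CM_mul (CM_comp hg.derivCM hh) hh.derivCM
  refine CM_congr ?_ hprod
  intro y hy
  have hgy : DifferentiableAt ℝ g (h y) :=
    (hg.smooth.differentiableOn (by simp)).differentiableAt (hSo.mem_nhds (hh.maps y hy))
  have hhy : DifferentiableAt ℝ h y :=
    (hh.smooth.differentiableOn (by simp)).differentiableAt (hSo.mem_nhds hy)
  have := (hgy.hasDerivAt.comp y hhy.hasDerivAt).deriv
  simp only [Function.comp_def] at this
  rw [this]

lemma rpow_smooth (c : ℝ) : ContDiffOn ℝ (⊤ : ℕ∞) (fun x : ℝ => x ^ c) S := fun x hx =>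
  (Real.contDiffAt_rpow_const_of_ne (ne_of_gt (mem_Ioi.mp hx))).contDiffWithinAt

lemma rpow_itd (c : ℝ) : ∀ n : ℕ, Set.EqOn (iteratedDeriv n (fun x : ℝ => x ^ c))
    (fun x => (∏ i ∈ Finset.range n, (c - i)) * x ^ (c - n)) S := by
  intro n
  induction n with
  | zero => intro x hx; simp
  | succ n IH =>
    intro x hx
    have hxpos : (0:ℝ) < x := hx
    rw [iteratedDeriv_succ]
    have hev : iteratedDeriv n (fun x : ℝ => x ^ c) =ᶠ[nhds x]
        (fun x => (∏ i ∈ Finset.range n, (c - i)) * x ^ (c - n)) := by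
      filter_upwards [hSo.mem_nhds hx] with y hy using IH hy
    rw [hev.deriv_eq]
    have hD : HasDerivAt (fun x : ℝ => x ^ (c - n)) ((c - n) * x ^ (c - n - 1)) x :=
      Real.hasDerivAt_rpow_const (Or.inl (ne_of_gt hxpos))
    rw [(hD.const_mul _).deriv]
    rw [Finset.prod_range_succ]
    have : c - n - 1 = c - (n + 1 : ℕ) := by push_cast; ring
    rw [this]
    ring

lemma CM_rpow (c : ℝ) (hc : 0 ≤ c) : CompletelyMonotoneOn (fun x : ℝ => x ^ (-c)) := by
  refine ⟨rpow_smooth (-c), fun m x hx => ?_⟩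
  rw [rpow_itd (-c) m hx]
  have hxpos : (0:ℝ) < x := hx
  have hprod : ∏ i ∈ Finset.range m, (-c - (i:ℝ)) =
      (-1:ℝ)^m * ∏ i ∈ Finset.range m, (c + (i:ℝ)) := by
    have h0 : ∀ i ∈ Finset.range m, -c - (i:ℝ) = -1 * (c + i) := fun i _ => by ring
    rw [Finset.prod_congr rfl h0, Finset.prod_mul_distrib, Finset.prod_const,
      Finset.card_range]
  rw [hprod]
  have h1 : (0:ℝ) ≤ ∏ i ∈ Finset.range m, (c + (i:ℝ)) :=
    Finset.prod_nonneg fun i _ => by positivity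
  have h2 : (0:ℝ) ≤ x ^ (-c - m) := Real.rpow_nonneg hxpos.le _
  have h3 : ((-1:ℝ)^m) * ((-1:ℝ)^m) = 1 := by
    rw [← pow_add]; exact (neg_one_pow_eq_one_iff_even (by norm_num)).mpr (Even.add_self m)
  calc (0:ℝ) ≤ (∏ i ∈ Finset.range m, (c + (i:ℝ))) * x ^ (-c - m) :=
        mul_nonneg h1 h2
    _ = (-1:ℝ)^m * ((-1:ℝ)^m * (∏ i ∈ Finset.range m, (c + (i:ℝ))) * x ^ (-c - m)) := by
        rw [← mul_assoc, ← mul_assoc, h3, one_mul]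
    _ = (-1:ℝ)^m * ((-1:ℝ)^m * (∏ i ∈ Finset.range m, (c + (i:ℝ))) * x ^ (-c - ↑m)) := rfl

lemma CM_shift_rpow (c : ℝ) (hc : 0 ≤ c) :
    CompletelyMonotoneOn (fun x : ℝ => (1 + x) ^ (-c)) := by
  constructor
  · exact (rpow_smooth (-c)).comp
      ((contDiff_const.add contDiff_id).contDiffOn) (fun x hx => by
        simp only [mem_Ioi] at hx ⊢; linarith)
  · intro m x hx
    have := iteratedDeriv_comp_const_add m (fun y : ℝ => y ^ (-c)) 1
    have h2 : iteratedDeriv m (fun x : ℝ => (1 + x) ^ (-c)) x =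
        iteratedDeriv m (fun y : ℝ => y ^ (-c)) (1 + x) := by
      rw [this]
    rw [h2]
    exact (CM_rpow c hc).2 m (1 + x) (by simp only [mem_Ioi] at hx ⊢; linarith)

lemma Bernstein_L : Bernstein Lfun := by
  refine ⟨?_, ?_, ?_⟩
  · intro x hx
    have hx' : (0:ℝ) < x := hx
    have : (1:ℝ) + x ≠ 0 := by linarith
    exact ((Real.contDiffAt_log.2 this).comp x
      ((contDiff_const.add contDiff_id).contDiffAt)).contDiffWithinAt
  · intro x hx
    have hx' : (0:ℝ) < x := hx
    exact Real.log_pos (by linarith)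
  · refine CM_congr ?_ (CM_shift_rpow 1 zero_le_one)
    intro y hy
    have hy' : (0:ℝ) < y := hy
    have hne : (1:ℝ) + y ≠ 0 := by linarith
    have hD : HasDerivAt Lfun (1 + y)⁻¹ y := by
      have h1 : HasDerivAt (fun x : ℝ => 1 + x) 1 y := (hasDerivAt_id y).const_add 1
      have h2 := (Real.hasDerivAt_log hne).comp y h1
      rw [mul_one] at h2; exact h2
    show (1 + y) ^ (-(1:ℝ)) = deriv Lfun y
    rw [Real.rpow_neg_one, hD.deriv]

lemma itd_const (c : ℝ) : ∀ n : ℕ, iteratedDeriv n (fun _ : ℝ => c) =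
    fun _ => if n = 0 then c else 0 := by
  intro n
  induction n with
  | zero => simp
  | succ n IH =>
    rw [iteratedDeriv_succ, IH]
    funext x
    rcases Nat.eq_zero_or_pos n with h | h <;> simp [h]

lemma CM_one : CompletelyMonotoneOn (fun _ : ℝ => (1:ℝ)) := by
  refine ⟨contDiffOn_const, fun m x hx => ?_⟩
  rw [itd_const 1 m]
  rcases Nat.eq_zero_or_pos m with h | h
  · simp [h]
  · simp [h.ne']

lemma Bernstein_Liter : ∀ j : ℕ, Bernstein (Lfun^[j+1]) := by
  intro j
  induction j with
  | zero => simpa using Bernstein_L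
  | succ j IH =>
    have heq : Lfun^[j+2] = fun x => Lfun^[j+1] (Lfun x) := by
      funext x; rw [Function.iterate_succ_apply]
    rw [heq]
    exact Bernstein_comp IH Bernstein_L

lemma CM_prod (αs : ℕ → ℝ) (hαs : ∀ j, 0 ≤ αs j) : ∀ k : ℕ,
    CompletelyMonotoneOn (fun x => ∏ j ∈ Finset.range k, (Lfun^[j+1] x) ^ (-(αs j))) := by
  intro k
  induction k with
  | zero => simpa using CM_one
  | succ k IH =>
    have heq : (fun x => ∏ j ∈ Finset.range (k+1), (Lfun^[j+1] x) ^ (-(αs j))) =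
        fun x => (∏ j ∈ Finset.range k, (Lfun^[j+1] x) ^ (-(αs j))) *
          (Lfun^[k+1] x) ^ (-(αs k)) := by
      funext x; rw [Finset.prod_range_succ]
    rw [heq]
    exact CM_mul IH (CM_comp (CM_rpow (αs k) (hαs k)) (Bernstein_Liter k))

end CMaux

/-- For `k ≥ 1` and nonnegative exponents `α, α₁, …, α_k`, the function
`x ↦ 1/(x^α L₁(x)^{α₁} ⋯ L_k(x)^{α_k})` is completely monotone on `(0,∞)`. -/
theorem iterated_log_completelyMonotone (k : ℕ) (hk : 1 ≤ k)
    (α : ℝ) (hα : 0 ≤ α) (αs : ℕ → ℝ) (hαs : ∀ j, 0 ≤ αs j) :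
    CompletelyMonotoneOn
      (fun x : ℝ =>
        1 / (x ^ α * ∏ j ∈ Finset.range k, (Lfun^[j + 1] x) ^ αs j)) := by
  have hCM : CompletelyMonotoneOn (fun x => x ^ (-α) *
      ∏ j ∈ Finset.range k, (Lfun^[j+1] x) ^ (-(αs j))) :=
    CMaux.CM_mul (CMaux.CM_rpow α hα) (CMaux.CM_prod αs hαs k)
  refine CMaux.CM_congr ?_ hCM
  intro x hx
  have hxpos : (0:ℝ) < x := hx
  have hLpos : ∀ j, 0 < Lfun^[j+1] x := fun j => (CMaux.Bernstein_Liter j).maps x hx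
  have h1 : x ^ (-α) = (x ^ α)⁻¹ := Real.rpow_neg hxpos.le α
  have h2 : ∀ j ∈ Finset.range k, (Lfun^[j+1] x) ^ (-(αs j)) =
      ((Lfun^[j+1] x) ^ (αs j))⁻¹ := fun j _ => Real.rpow_neg (hLpos j).le _
  simp only [Finset.prod_congr rfl h2, h1, one_div, Finset.prod_inv_distrib, mul_inv]
end

section
/- Let μ be a CM probability measure on ℤ with representing measure ν. If there exists L > 0 such that ∫₀ˣ t/(1−t)² ν(dt) ≤ (L/(1−x)) ∫ₓ¹ t/(1−t) ν(dt) for all x ∈ [0,1), then there exists K > 0 such that |Im μ̂(θ)| ≤ K (1 − Re μ̂(θ)) for all θ ∈ [−π, π]. -/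
/-!
Since `μ̂(θ) = ∫ ν(dt) / (1 - t e^{iθ})`, both sides of the inequality are `ν`-integrals of
explicit kernels. With `D = |1 - t e^{iθ}|² = (1 - t)² + 2t(1 - cos θ)` and `∫ ν(dt)/(1 - t) = 1`,
`1 - Re μ̂(θ) = ∫ t(1 + t)(1 - cos θ) / ((1 - t) D) ν(dt)` and `|Im μ̂(θ)| ≤ ∫ t |sin θ| / D ν(dt)`.
For `|θ| ≥ 1/2` the second kernel is at most `20` times the first. For small `θ ≠ 0` split at
`x = 1 - |θ|`: on `[0, x]` the imaginary kernel is at most `|θ| t / (1 - t)²`, whose integral the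
hypothesis bounds by `L A` with `A = ∫_{[x, 1]} t / (1 - t) ν(dt)`; on `(x, 1)` it is at most
`t / (1 - t)`, contributing at most `A`; and on `[x, 1)` the real kernel is at least
`t / (10 (1 - t))`, so `A ≤ 10 (1 - Re μ̂(θ))`.
-/

open MeasureTheory Set

open Real in
noncomputable def kernelDenom (θ t : ℝ) : ℝ := 1 - 2 * t * cos θ + t ^ 2

noncomputable def cauchyKernel (θ t : ℝ) : ℂ := (1 - t * Complex.exp (Complex.I * θ))⁻¹

open Real in
noncomputable def reGapKernel (θ t : ℝ) : ℝ :=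
  t * (1 + t) * (1 - cos θ) / ((1 - t) * kernelDenom θ t)

open Real in
noncomputable def absImKernel (θ t : ℝ) : ℝ := t * |sin θ| / kernelDenom θ t

section RealKernels

open Real

variable {θ t : ℝ}

lemma kernelDenom_eq (θ t : ℝ) : kernelDenom θ t = (1 - t) ^ 2 + 2 * t * (1 - cos θ) := by
  unfold kernelDenom; ring

lemma sq_one_sub_le_kernelDenom (ht : 0 ≤ t) : (1 - t) ^ 2 ≤ kernelDenom θ t := by
  rw [kernelDenom_eq]
  nlinarith [cos_le_one θ]

lemma kernelDenom_pos (ht : 0 ≤ t) (ht1 : t < 1) : 0 < kernelDenom θ t :=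
  (pow_pos (sub_pos.2 ht1) 2).trans_le (sq_one_sub_le_kernelDenom ht)

lemma sq_div_five_le_one_sub_cos (hθ : |θ| ≤ π) : θ ^ 2 / 5 ≤ 1 - cos θ := by
  have hcos := cos_le_one_sub_mul_cos_sq hθ
  have h : 1 / 5 ≤ 2 / π ^ 2 := by
    rw [div_le_div_iff₀ (by norm_num) (by positivity)]
    nlinarith [pi_lt_d2, pi_gt_three]
  nlinarith [sq_nonneg θ]

lemma reGapKernel_nonneg (ht : 0 ≤ t) (ht1 : t < 1) : 0 ≤ reGapKernel θ t := by
  have := cos_le_one θ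
  have := kernelDenom_pos (θ := θ) ht ht1
  unfold reGapKernel
  positivity

lemma absImKernel_le_mul_div_sq (ht : 0 ≤ t) (ht1 : t < 1) :
    absImKernel θ t ≤ |θ| * (t / (1 - t) ^ 2) := by
  rw [absImKernel, mul_div_assoc', mul_comm |θ|]
  exact div_le_div₀ (by positivity) (mul_le_mul_of_nonneg_left abs_sin_le_abs ht)
    (pow_pos (sub_pos.2 ht1) 2) (sq_one_sub_le_kernelDenom ht)

lemma absImKernel_le_div_one_sub (ht : 1 / 2 ≤ t) (ht1 : t < 1) :
    absImKernel θ t ≤ t / (1 - t) := by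
  rw [absImKernel, div_le_div_iff₀ (kernelDenom_pos (by linarith) ht1) (by linarith)]
  -- `|sin θ| (1 - t) ≤ (1 - t)² + sin² θ / 4 ≤ (1 - t)² + 2 t (1 - cos θ)`
  have key : |sin θ| * (1 - t) ≤ kernelDenom θ t := by
    rw [kernelDenom_eq]
    nlinarith [sq_nonneg (1 - t - |sin θ| / 2), sq_abs (sin θ), sin_sq_add_cos_sq θ,
      cos_le_one θ, neg_one_le_cos θ]
  nlinarith [abs_nonneg (sin θ)]

lemma div_one_sub_div_ten_le_reGapKernel (hθ : |θ| ≤ π) (ht : 1 - |θ| ≤ t) (ht0 : 0 ≤ t)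
    (ht1 : t < 1) : t / (1 - t) / 10 ≤ reGapKernel θ t := by
  have hD := kernelDenom_pos (θ := θ) ht0 ht1
  have hcos := sq_div_five_le_one_sub_cos hθ
  have hsq : (1 - t) ^ 2 ≤ θ ^ 2 := by
    rw [← sq_abs θ]
    exact pow_le_pow_left₀ (by linarith) (by linarith) 2
  have key : kernelDenom θ t ≤ 10 * ((1 + t) * (1 - cos θ)) := by
    rw [kernelDenom_eq]; nlinarith
  rw [reGapKernel, div_div, mul_assoc, div_le_div_iff₀ (by positivity) (by nlinarith)]
  nlinarith [mul_nonneg ht0 (sub_nonneg.2 ht1.le)]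

lemma absImKernel_le_reGapKernel (hθ : |θ| ≤ π) (hθ' : 1 / 2 ≤ |θ|) (ht : 0 ≤ t)
    (ht1 : t < 1) : absImKernel θ t ≤ 20 * reGapKernel θ t := by
  have hD := kernelDenom_pos (θ := θ) ht ht1
  have hcos : 1 / 20 ≤ 1 - cos θ := by
    nlinarith [sq_div_five_le_one_sub_cos hθ, sq_abs θ]
  have key : |sin θ| * (1 - t) ≤ 20 * ((1 + t) * (1 - cos θ)) := by
    nlinarith [abs_sin_le_one θ, abs_nonneg (sin θ)]
  rw [absImKernel, reGapKernel, mul_div_assoc', div_le_div_iff₀ hD (by positivity)]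
  nlinarith [mul_le_mul_of_nonneg_right key (mul_nonneg ht hD.le)]

end RealKernels

section ComplexKernel

open Complex

variable {θ t : ℝ}

lemma one_sub_mul_exp_re (θ t : ℝ) : (1 - t * exp (I * θ)).re = 1 - t * Real.cos θ := by
  simp [mul_comm I, exp_mul_I, ← ofReal_cos, ← ofReal_sin]

lemma one_sub_mul_exp_im (θ t : ℝ) : (1 - t * exp (I * θ)).im = -(t * Real.sin θ) := by
  simp [mul_comm I, exp_mul_I, ← ofReal_cos, ← ofReal_sin]

lemma normSq_one_sub_mul_exp (θ t : ℝ) : normSq (1 - t * exp (I * θ)) = kernelDenom θ t := by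
  rw [normSq_apply, one_sub_mul_exp_re, one_sub_mul_exp_im, kernelDenom]
  linear_combination t ^ 2 * Real.sin_sq_add_cos_sq θ

lemma cauchyKernel_re (θ t : ℝ) :
    (cauchyKernel θ t).re = (1 - t * Real.cos θ) / kernelDenom θ t := by
  rw [cauchyKernel, inv_re, one_sub_mul_exp_re, normSq_one_sub_mul_exp]

lemma cauchyKernel_im (θ t : ℝ) : (cauchyKernel θ t).im = t * Real.sin θ / kernelDenom θ t := by
  rw [cauchyKernel, inv_im, one_sub_mul_exp_im, normSq_one_sub_mul_exp, neg_neg]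

lemma inv_one_sub_sub_cauchyKernel_re (ht : 0 ≤ t) (ht1 : t < 1) :
    (1 - t)⁻¹ - (cauchyKernel θ t).re = reGapKernel θ t := by
  have hD := (kernelDenom_pos (θ := θ) ht ht1).ne'
  rw [cauchyKernel_re, reGapKernel, inv_eq_one_div, div_sub_div _ _ (by linarith) hD,
    kernelDenom]
  ring

lemma abs_cauchyKernel_im (ht : 0 ≤ t) : |(cauchyKernel θ t).im| = absImKernel θ t := by
  rw [cauchyKernel_im, absImKernel, abs_div, abs_mul, abs_of_nonneg ht,
    abs_of_nonneg ((sq_nonneg _).trans (sq_one_sub_le_kernelDenom ht))]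

lemma norm_mul_exp_I_mul (θ t : ℝ) : ‖(t : ℂ) * exp (I * θ)‖ = |t| := by
  rw [norm_mul, mul_comm I, norm_exp_ofReal_mul_I, mul_one, norm_real, Real.norm_eq_abs]

lemma norm_cauchyKernel_le (ht : 0 ≤ t) (ht1 : t < 1) : ‖cauchyKernel θ t‖ ≤ (1 - t)⁻¹ := by
  rw [cauchyKernel, norm_inv]
  refine inv_anti₀ (sub_pos.2 ht1) ?_
  calc 1 - t = ‖(1 : ℂ)‖ - ‖(t : ℂ) * exp (I * θ)‖ := by
        rw [norm_mul_exp_I_mul, norm_one, abs_of_nonneg ht]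
    _ ≤ _ := norm_sub_norm_le _ _

lemma hasSum_pow_mul_exp (θ : ℝ) (ht : |t| < 1) :
    HasSum (fun n : ℕ => ((t ^ n : ℝ) : ℂ) * exp (I * n * θ)) (cauchyKernel θ t) := by
  have hpow (n : ℕ) : ((t ^ n : ℝ) : ℂ) * exp (I * n * θ) = ((t : ℂ) * exp (I * θ)) ^ n := by
    rw [mul_pow, ← exp_nat_mul]
    push_cast
    ring_nf
  simp_rw [hpow]
  exact hasSum_geometric_of_norm_lt_one (by rwa [norm_mul_exp_I_mul])

end ComplexKernel

section Integrals

variable {ν : Measure ℝ} {θ : ℝ}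

lemma measurable_cauchyKernel (θ : ℝ) : Measurable (cauchyKernel θ) :=
  (measurable_const.sub (Complex.measurable_ofReal.mul_const _)).inv

lemma integrableOn_cauchyKernel (hint : IntegrableOn (fun t : ℝ => (1 - t)⁻¹) (Ico 0 1) ν) :
    IntegrableOn (cauchyKernel θ) (Ico 0 1) ν :=
  hint.mono' (measurable_cauchyKernel θ).aestronglyMeasurable <|
    ae_restrict_of_forall_mem measurableSet_Ico fun _ ht => norm_cauchyKernel_le ht.1 ht.2

lemma integrableOn_reGapKernel (hint : IntegrableOn (fun t : ℝ => (1 - t)⁻¹) (Ico 0 1) ν) :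
    IntegrableOn (reGapKernel θ) (Ico 0 1) ν :=
  (hint.sub (integrableOn_cauchyKernel hint).re).congr_fun
    (fun _ ht => inv_one_sub_sub_cauchyKernel_re ht.1 ht.2) measurableSet_Ico

lemma integrableOn_absImKernel (hint : IntegrableOn (fun t : ℝ => (1 - t)⁻¹) (Ico 0 1) ν) :
    IntegrableOn (absImKernel θ) (Ico 0 1) ν :=
  IntegrableOn.congr_fun (integrableOn_cauchyKernel hint).im.abs
    (fun _ ht => abs_cauchyKernel_im ht.1) measurableSet_Ico

lemma integrableOn_div_one_sub {x : ℝ} (hx : 0 ≤ x)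
    (hint : IntegrableOn (fun t : ℝ => (1 - t)⁻¹) (Ico 0 1) ν) :
    IntegrableOn (fun t : ℝ => t / (1 - t)) (Ico x 1) ν :=
  (hint.mono_set (Ico_subset_Ico_left hx)).mono'
    (measurable_id.div (measurable_const.sub measurable_id)).aestronglyMeasurable <|
    ae_restrict_of_forall_mem measurableSet_Ico fun t ht => by
      have h1t : 0 < 1 - t := sub_pos.2 ht.2
      rw [Real.norm_of_nonneg (div_nonneg (hx.trans ht.1) h1t.le), div_eq_mul_inv]
      exact mul_le_of_le_one_left (inv_nonneg.2 h1t.le) ht.2.le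

lemma hasSum_moment_mul_exp (hint : IntegrableOn (fun t : ℝ => (1 - t)⁻¹) (Ico 0 1) ν)
    (θ : ℝ) :
    HasSum (fun n : ℕ => ((∫ t in Ico 0 1, t ^ n ∂ν : ℝ) : ℂ) * Complex.exp (Complex.I * n * θ))
      (∫ t in Ico 0 1, cauchyKernel θ t ∂ν) := by
  have hmem : ∀ᵐ t ∂ν.restrict (Ico 0 1), t ∈ Ico (0 : ℝ) 1 :=
    ae_restrict_mem measurableSet_Ico
  have hgeom : ∀ᵐ t ∂ν.restrict (Ico 0 1), HasSum (fun n : ℕ => t ^ n) (1 - t)⁻¹ := by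
    filter_upwards [hmem] with t ht using hasSum_geometric_of_lt_one ht.1 ht.2
  simp_rw [← integral_complex_ofReal, ← integral_mul_const]
  refine hasSum_integral_of_dominated_convergence (fun n t => t ^ n)
    (fun n => by fun_prop) (fun n => ?_) (hgeom.mono fun _ h => h.summable)
    (hint.congr_fun_ae (hgeom.mono fun _ h => h.tsum_eq.symm)) ?_
  · filter_upwards [hmem] with t ht
    simp [Complex.norm_exp, abs_of_nonneg ht.1]
  · filter_upwards [hmem] with t ht
    exact hasSum_pow_mul_exp θ (abs_lt.2 ⟨by linarith [ht.1], ht.2⟩)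

lemma integral_reGapKernel (hint : IntegrableOn (fun t : ℝ => (1 - t)⁻¹) (Ico 0 1) ν) :
    ∫ t in Ico 0 1, reGapKernel θ t ∂ν =
      ∫ t in Ico 0 1, (1 - t)⁻¹ ∂ν - (∫ t in Ico 0 1, cauchyKernel θ t ∂ν).re := by
  rw [← RCLike.re_to_complex, ← integral_re (integrableOn_cauchyKernel hint), ← integral_sub hint
    (integrableOn_cauchyKernel hint).re]
  exact setIntegral_congr_fun measurableSet_Ico fun t ht =>
    (inv_one_sub_sub_cauchyKernel_re ht.1 ht.2).symm

lemma abs_im_integral_cauchyKernel_le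
    (hint : IntegrableOn (fun t : ℝ => (1 - t)⁻¹) (Ico 0 1) ν) :
    |(∫ t in Ico 0 1, cauchyKernel θ t ∂ν).im| ≤ ∫ t in Ico 0 1, absImKernel θ t ∂ν := by
  rw [← RCLike.im_to_complex, ← integral_im (integrableOn_cauchyKernel hint)]
  calc _ ≤ ∫ t in Ico 0 1, |(cauchyKernel θ t).im| ∂ν := abs_integral_le_integral_abs
    _ = _ := setIntegral_congr_fun measurableSet_Ico fun t ht => abs_cauchyKernel_im ht.1

lemma integral_absImKernel_le_of_half_le_abs
    (hint : IntegrableOn (fun t : ℝ => (1 - t)⁻¹) (Ico 0 1) ν) (hθ : |θ| ≤ Real.pi)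
    (hθ' : 1 / 2 ≤ |θ|) :
    ∫ t in Ico 0 1, absImKernel θ t ∂ν ≤ 20 * ∫ t in Ico 0 1, reGapKernel θ t ∂ν := by
  rw [← integral_const_mul]
  exact setIntegral_mono_on (integrableOn_absImKernel hint)
    ((integrableOn_reGapKernel hint).const_mul 20) measurableSet_Ico fun t ht =>
    absImKernel_le_reGapKernel hθ hθ' ht.1 ht.2

lemma setIntegral_Icc_absImKernel_le [IsFiniteMeasure ν]
    (hint : IntegrableOn (fun t : ℝ => (1 - t)⁻¹) (Ico 0 1) ν) {x : ℝ} (hx : x < 1) :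
    ∫ t in Icc 0 x, absImKernel θ t ∂ν ≤ |θ| * ∫ t in Icc 0 x, t / (1 - t) ^ 2 ∂ν := by
  have hcont : ContinuousOn (fun t : ℝ => t / (1 - t) ^ 2) (Icc 0 x) :=
    continuousOn_id.div (by fun_prop) fun t ht => by nlinarith [ht.2]
  rw [← integral_const_mul]
  exact setIntegral_mono_on
    ((integrableOn_absImKernel hint).mono_set (Icc_subset_Ico_right hx))
    ((hcont.integrableOn_compact isCompact_Icc).const_mul _) measurableSet_Icc fun t ht =>
    absImKernel_le_mul_div_sq ht.1 (ht.2.trans_lt hx)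

lemma setIntegral_Ioo_absImKernel_le
    (hint : IntegrableOn (fun t : ℝ => (1 - t)⁻¹) (Ico 0 1) ν) {x : ℝ} (hx : 1 / 2 ≤ x) :
    ∫ t in Ioo x 1, absImKernel θ t ∂ν ≤ ∫ t in Ico x 1, t / (1 - t) ∂ν := by
  have hx0 : 0 ≤ x := by linarith
  calc _ ≤ ∫ t in Ioo x 1, t / (1 - t) ∂ν :=
        setIntegral_mono_on
          ((integrableOn_absImKernel hint).mono_set (Ioo_subset_Ico_self.trans
            (Ico_subset_Ico_left hx0)))
          ((integrableOn_div_one_sub hx0 hint).mono_set Ioo_subset_Ico_self) measurableSet_Ioo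
          fun t ht => absImKernel_le_div_one_sub (hx.trans ht.1.le) ht.2
    _ ≤ _ := setIntegral_mono_set (integrableOn_div_one_sub hx0 hint)
        (ae_restrict_of_forall_mem measurableSet_Ico fun t ht =>
          div_nonneg (hx0.trans ht.1) (sub_nonneg.2 ht.2.le))
        Ioo_subset_Ico_self.eventuallyLE

lemma setIntegral_div_one_sub_div_ten_le
    (hint : IntegrableOn (fun t : ℝ => (1 - t)⁻¹) (Ico 0 1) ν) (hθ : |θ| ≤ Real.pi) {x : ℝ}
    (hx0 : 0 ≤ x) (hx : 1 - |θ| ≤ x) :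
    (∫ t in Ico x 1, t / (1 - t) ∂ν) / 10 ≤ ∫ t in Ico 0 1, reGapKernel θ t ∂ν := by
  rw [← integral_div]
  calc _ ≤ ∫ t in Ico x 1, reGapKernel θ t ∂ν :=
        setIntegral_mono_on ((integrableOn_div_one_sub hx0 hint).div_const 10)
          ((integrableOn_reGapKernel hint).mono_set (Ico_subset_Ico_left hx0))
          measurableSet_Ico fun t ht =>
          div_one_sub_div_ten_le_reGapKernel hθ (hx.trans ht.1) (hx0.trans ht.1) ht.2
    _ ≤ _ := setIntegral_mono_set (integrableOn_reGapKernel hint)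
        (ae_restrict_of_forall_mem measurableSet_Ico fun t ht =>
          reGapKernel_nonneg ht.1 ht.2)
        (Ico_subset_Ico_left hx0).eventuallyLE

lemma integral_absImKernel_le_of_abs_lt_half [IsFiniteMeasure ν]
    (hint : IntegrableOn (fun t : ℝ => (1 - t)⁻¹) (Ico 0 1) ν) {L : ℝ} (hL : 0 ≤ L)
    (hcond : ∀ x ∈ Ico (0 : ℝ) 1,
      ∫ t in Icc 0 x, t / (1 - t) ^ 2 ∂ν ≤ L / (1 - x) * ∫ t in Ico x 1, t / (1 - t) ∂ν)
    (hθ : |θ| ≤ Real.pi) (hθ0 : θ ≠ 0) (hθ' : |θ| < 1 / 2) :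
    ∫ t in Ico 0 1, absImKernel θ t ∂ν ≤ 10 * (L + 1) * ∫ t in Ico 0 1, reGapKernel θ t ∂ν := by
  set x := 1 - |θ| with hx
  have hθpos : 0 < |θ| := abs_pos.2 hθ0
  have hx1 : x < 1 := by linarith
  set A := ∫ t in Ico x 1, t / (1 - t) ∂ν
  have hlow : ∫ t in Icc 0 x, absImKernel θ t ∂ν ≤ L * A := by
    calc _ ≤ |θ| * ∫ t in Icc 0 x, t / (1 - t) ^ 2 ∂ν := setIntegral_Icc_absImKernel_le hint hx1
      _ ≤ |θ| * (L / (1 - x) * A) :=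
        mul_le_mul_of_nonneg_left (hcond x ⟨by linarith, hx1⟩) hθpos.le
      _ = L * A := by rw [hx, sub_sub_cancel]; field_simp
  have hhigh : ∫ t in Ioo x 1, absImKernel θ t ∂ν ≤ A :=
    setIntegral_Ioo_absImKernel_le hint (by linarith)
  have hA : A / 10 ≤ ∫ t in Ico 0 1, reGapKernel θ t ∂ν :=
    setIntegral_div_one_sub_div_ten_le hint hθ (by linarith) le_rfl
  have hunion : Icc 0 x ∪ Ioo x 1 = Ico 0 1 := Icc_union_Ioo_eq_Ico (by linarith) hx1
  have hP := integrableOn_absImKernel (θ := θ) hint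
  rw [← hunion] at hP
  calc _ = ∫ t in Icc 0 x, absImKernel θ t ∂ν + ∫ t in Ioo x 1, absImKernel θ t ∂ν := by
        rw [← hunion, setIntegral_union (disjoint_left.2 fun t h1 h2 => h2.1.not_ge h1.2)
          measurableSet_Ioo hP.left_of_union hP.right_of_union]
    _ ≤ (L + 1) * A := by linarith
    _ ≤ 10 * (L + 1) * ∫ t in Ico 0 1, reGapKernel θ t ∂ν := by nlinarith

lemma integral_absImKernel_le [IsFiniteMeasure ν] {L : ℝ}
    (hint : IntegrableOn (fun t : ℝ => (1 - t)⁻¹) (Ico 0 1) ν) (hL : 0 ≤ L)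
    (hcond : ∀ x ∈ Ico (0 : ℝ) 1,
      ∫ t in Icc 0 x, t / (1 - t) ^ 2 ∂ν ≤ L / (1 - x) * ∫ t in Ico x 1, t / (1 - t) ∂ν)
    (hθ : |θ| ≤ Real.pi) :
    ∫ t in Ico 0 1, absImKernel θ t ∂ν ≤ 10 * (L + 2) * ∫ t in Ico 0 1, reGapKernel θ t ∂ν := by
  have hgap : 0 ≤ ∫ t in Ico 0 1, reGapKernel θ t ∂ν :=
    setIntegral_nonneg measurableSet_Ico fun t ht => reGapKernel_nonneg ht.1 ht.2
  rcases le_or_gt (1 / 2) |θ| with hlarge | hsmall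
  · calc _ ≤ 20 * ∫ t in Ico 0 1, reGapKernel θ t ∂ν :=
          integral_absImKernel_le_of_half_le_abs hint hθ hlarge
      _ ≤ _ := by gcongr; linarith
  rcases eq_or_ne θ 0 with rfl | hθ0
  · simp only [absImKernel, Real.sin_zero, abs_zero, mul_zero, zero_div, integral_zero]
    positivity
  · calc _ ≤ 10 * (L + 1) * ∫ t in Ico 0 1, reGapKernel θ t ∂ν :=
          integral_absImKernel_le_of_abs_lt_half hint hL hcond hθ hθ0 hsmall
      _ ≤ _ := by gcongr; linarith

end Integrals

theorem cm_bar_of_integral_condition_general (ν : Measure ℝ) [IsFiniteMeasure ν]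
    (hone : ν {1} = 0)
    (hint : IntegrableOn (fun t : ℝ => (1 - t)⁻¹) (Icc 0 1) ν)
    (hprob : ∫ t in Icc (0 : ℝ) 1, (1 - t)⁻¹ ∂ν = 1)
    (μhat : ℝ → ℂ)
    (hμhat : ∀ θ : ℝ, μhat θ =
      ∑' n : ℕ, ((∫ t in Icc (0 : ℝ) 1, t ^ n ∂ν : ℝ) : ℂ) *
        Complex.exp (Complex.I * n * θ))
    (L : ℝ) (hL : 0 < L)
    (hcond : ∀ x ∈ Ico (0 : ℝ) 1,
      ∫ t in Icc (0 : ℝ) x, t / (1 - t) ^ 2 ∂ν ≤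
        (L / (1 - x)) * ∫ t in Icc x 1, t / (1 - t) ∂ν) :
    ∃ K : ℝ, 0 < K ∧ ∀ θ ∈ Icc (-Real.pi) Real.pi,
      |(μhat θ).im| ≤ K * (1 - (μhat θ).re) := by
  -- on `Ico · 1` the pointwise kernel bounds hold; at `t = 1` they fail for the junk `(1 - 1)⁻¹ = 0`
  have hIco (a : ℝ) : Ico a 1 =ᵐ[ν] Icc a 1 := Ico_ae_eq_Icc' hone
  have hint' : IntegrableOn (fun t : ℝ => (1 - t)⁻¹) (Ico 0 1) ν :=
    hint.mono_set Ico_subset_Icc_self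
  have hprob' : ∫ t in Ico 0 1, (1 - t)⁻¹ ∂ν = 1 := by rw [setIntegral_congr_set (hIco 0), hprob]
  have hcond' : ∀ x ∈ Ico (0 : ℝ) 1,
      ∫ t in Icc 0 x, t / (1 - t) ^ 2 ∂ν ≤ L / (1 - x) * ∫ t in Ico x 1, t / (1 - t) ∂ν := by
    intro x hx
    rw [setIntegral_congr_set (hIco x)]
    exact hcond x hx
  have hμhat' (θ : ℝ) : μhat θ = ∫ t in Ico 0 1, cauchyKernel θ t ∂ν := by
    simp_rw [hμhat θ, ← (hasSum_moment_mul_exp hint' θ).tsum_eq, setIntegral_congr_set (hIco 0)]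
  refine ⟨10 * (L + 2), by positivity, fun θ hθ => ?_⟩
  have hgap := integral_reGapKernel (θ := θ) hint'
  rw [hprob'] at hgap
  rw [hμhat', ← hgap]
  exact (abs_im_integral_cauchyKernel_le hint').trans
    (integral_absImKernel_le hint' hL.le hcond' (abs_le.2 hθ))

/-- For a CM probability measure on `ℤ`, the integral condition on the
representing measure `ν` implies the bounded angular ratio property. -/
theorem cm_bar_of_integral_condition (ν : Measure ℝ) [IsFiniteMeasure ν]
    (hsupp : ν (Icc (0 : ℝ) 1)ᶜ = 0) (hone : ν {1} = 0)
    (hint : IntegrableOn (fun t : ℝ => (1 - t)⁻¹) (Icc 0 1) ν)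
    (hprob : ∫ t in Icc (0 : ℝ) 1, (1 - t)⁻¹ ∂ν = 1)
    (μhat : ℝ → ℂ)
    (hμhat : ∀ θ : ℝ, μhat θ =
      ∑' n : ℕ, ((∫ t in Icc (0 : ℝ) 1, t ^ n ∂ν : ℝ) : ℂ) *
        Complex.exp (Complex.I * n * θ))
    (L : ℝ) (hL : 0 < L)
    (hcond : ∀ x ∈ Ico (0 : ℝ) 1,
      ∫ t in Icc (0 : ℝ) x, t / (1 - t) ^ 2 ∂ν ≤
        (L / (1 - x)) * ∫ t in Icc x 1, t / (1 - t) ∂ν) :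
    ∃ K : ℝ, 0 < K ∧ ∀ θ ∈ Icc (-Real.pi) Real.pi,
      |(μhat θ).im| ≤ K * (1 - (μhat θ).re) :=
  cm_bar_of_integral_condition_general ν hone hint hprob μhat hμhat L hL hcond
end

section
/- Define χ(z) = ∫₀¹ ν(dt)/(1−t) − ∫₀¹ ν(dt)/(1−t+tz) for a finite positive measure ν on [0,1] with ∫₀¹ ν(dt)/(1−t) = 1, and assume ν satisfies: ∃L>0, ∀x∈[0,1): ∫₀ˣ t/(1−t)² ν(dt) ≤ (L/(1−x)) ∫ₓ¹ t/(1−t) ν(dt). Then there exists C > 0 such that for every z = a+ib with a ≥ 0 one has |Im χ(z)| ≤ C Re χ(z); i.e. χ maps the closed right half-plane into a sector around the positive real axis. -/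
/-!
Write `χ z = ∫ k z t dμ(t)` with `k z t = (1 - t)⁻¹ - (1 - t + t z)⁻¹` and `μ = ν` restricted to
`[0, 1]`, which lives on `[0, 1)`. Pointwise `Re k ≥ 0` and `|Im k| ≤ (1 - t)⁻¹ / 2`.

If `|Im z| > 1/2`, then `|z| ≥ 1/2` and `Re k ≥ t² / 16`, so `|Im χ z|` is bounded while
`Re χ z ≥ ∫ t² dμ / 16`; this is a positive constant unless `μ` lives on `{0}`, where `χ = 0`.

If `|Im z| ≤ 1/2`, split at `x = 1 / (1 + |Im z|)`. On `(x, 1)` one has `1 - t ≤ t |Im z|`, which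
gives `|Im k| ≤ Re k` and `t / (1 - t) ≤ 2 Re k`. On `[0, x]` one has
`|Im k| ≤ |Im z| t / (1 - t)²`, and the hypothesis on `ν` bounds its integral by
`L (1 + |Im z|) ∫_{[x, 1]} t / (1 - t) dμ ≤ 2 L (1 + |Im z|) Re χ z`.
-/

open MeasureTheory Set

noncomputable def chiKernel (z : ℂ) (t : ℝ) : ℂ :=
  (((1 - t)⁻¹ : ℝ) : ℂ) - (1 - t + t * z)⁻¹

section Pointwise

open Complex

variable {z : ℂ} {t : ℝ}

lemma normSq_one_sub_add_mul (z : ℂ) (t : ℝ) :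
    normSq (1 - t + t * z) = (1 - t + t * z.re) ^ 2 + (t * z.im) ^ 2 := by
  simp only [normSq_apply, add_re, sub_re, one_re, ofReal_re, mul_re, ofReal_im, zero_mul, sub_zero,
    add_im, sub_im, one_im, sub_self, mul_im, add_zero, zero_add]
  ring

lemma chiKernel_im (z : ℂ) (t : ℝ) :
    (chiKernel z t).im = t * z.im / normSq (1 - t + t * z) := by
  simp [chiKernel, inv_im, neg_div]

lemma sq_one_sub_le_normSq (ht0 : 0 ≤ t) (ht1 : t < 1) (hz : 0 ≤ z.re) :
    (1 - t) ^ 2 ≤ normSq (1 - t + t * z) := by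
  rw [normSq_one_sub_add_mul]
  nlinarith [mul_nonneg ht0 hz, sq_nonneg (t * z.im)]

lemma normSq_one_sub_add_mul_pos (ht0 : 0 ≤ t) (ht1 : t < 1) (hz : 0 ≤ z.re) :
    0 < normSq (1 - t + t * z) :=
  (pow_pos (sub_pos.2 ht1) 2).trans_le (sq_one_sub_le_normSq ht0 ht1 hz)

lemma chiKernel_re (ht0 : 0 ≤ t) (ht1 : t < 1) (hz : 0 ≤ z.re) :
    (chiKernel z t).re =
      t * ((1 - t) * z.re + t * normSq z) / ((1 - t) * normSq (1 - t + t * z)) := by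
  have hD := normSq_one_sub_add_mul_pos ht0 ht1 hz
  have h1 : 1 - t ≠ 0 := (sub_pos.2 ht1).ne'
  have hre : (1 - t + t * z).re = 1 - t + t * z.re := by simp
  rw [chiKernel, sub_re, ofReal_re, inv_re, hre, inv_eq_one_div, div_sub_div _ _ h1 hD.ne']
  congr 1
  rw [normSq_one_sub_add_mul, normSq_apply]
  ring

lemma chiKernel_re_nonneg (ht0 : 0 ≤ t) (ht1 : t < 1) (hz : 0 ≤ z.re) :
    0 ≤ (chiKernel z t).re := by
  rw [chiKernel_re ht0 ht1 hz]
  have h1 : 0 ≤ 1 - t := sub_nonneg.2 ht1.le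
  exact div_nonneg (mul_nonneg ht0 (add_nonneg (mul_nonneg h1 hz)
    (mul_nonneg ht0 (normSq_nonneg z)))) (mul_nonneg h1 (normSq_nonneg _))

lemma abs_chiKernel_im_le_mul (ht0 : 0 ≤ t) (ht1 : t < 1) (hz : 0 ≤ z.re) :
    |(chiKernel z t).im| ≤ |z.im| * (t / (1 - t) ^ 2) := by
  have h1 := pow_pos (sub_pos.2 ht1) 2
  rw [chiKernel_im, abs_div, abs_mul, abs_of_nonneg ht0, abs_of_nonneg (normSq_nonneg _),
    div_le_iff₀ (normSq_one_sub_add_mul_pos ht0 ht1 hz), mul_div_assoc', div_mul_eq_mul_div,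
    le_div_iff₀ h1, mul_comm |z.im|]
  exact mul_le_mul_of_nonneg_left (sq_one_sub_le_normSq ht0 ht1 hz) (by positivity)

lemma abs_chiKernel_im_le_inv (ht0 : 0 ≤ t) (ht1 : t < 1) (hz : 0 ≤ z.re) :
    |(chiKernel z t).im| ≤ (1 - t)⁻¹ / 2 := by
  have h1 := sub_pos.2 ht1
  have hD := normSq_one_sub_add_mul_pos ht0 ht1 hz
  -- AM-GM: `2 (1 - t) t |Im z| ≤ (1 - t)² + (t Im z)² ≤ |1 - t + t z|²`
  have key : t * |z.im| * (2 * (1 - t)) ≤ normSq (1 - t + t * z) := by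
    rw [normSq_one_sub_add_mul, ← sq_abs (t * z.im), abs_mul, abs_of_nonneg ht0]
    nlinarith [sq_nonneg (1 - t - t * |z.im|), mul_nonneg ht0 hz]
  rw [chiKernel_im, abs_div, abs_mul, abs_of_nonneg ht0, abs_of_nonneg (normSq_nonneg _),
    div_le_iff₀ hD]
  calc t * |z.im| = t * |z.im| * (2 * (1 - t)) * ((1 - t)⁻¹ / 2) := by field_simp
    _ ≤ normSq (1 - t + t * z) * ((1 - t)⁻¹ / 2) := by gcongr
    _ = (1 - t)⁻¹ / 2 * normSq (1 - t + t * z) := mul_comm _ _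

lemma sq_div_le_chiKernel_re (ht0 : 0 ≤ t) (ht1 : t < 1) (hz : 0 ≤ z.re)
    (hz2 : 1 / 4 ≤ normSq z) : t ^ 2 / 16 ≤ (chiKernel z t).re := by
  have h1 := sub_pos.2 ht1
  have hD := normSq_one_sub_add_mul_pos ht0 ht1 hz
  have hDle : normSq (1 - t + t * z) ≤ 2 + 2 * normSq z := by
    rw [normSq_one_sub_add_mul, normSq_apply]
    nlinarith [sq_nonneg (1 - t - t * z.re), mul_nonneg ht0 hz, sq_nonneg z.re, sq_nonneg z.im,
      mul_le_one₀ ht1.le ht0 ht1.le]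
  have hpD : (1 - t) * normSq (1 - t + t * z) ≤ 2 + 2 * normSq z := by nlinarith
  rw [chiKernel_re ht0 ht1 hz, le_div_iff₀ (mul_pos h1 hD)]
  nlinarith [mul_le_mul_of_nonneg_left hpD (sq_nonneg t), mul_nonneg (mul_nonneg ht0 ht0) hz,
    mul_nonneg (mul_nonneg ht0 h1.le) hz]

lemma div_one_sub_le_two_mul_chiKernel_re (ht0 : 0 ≤ t) (ht1 : t < 1) (hz : 0 ≤ z.re)
    (htb : 1 - t ≤ t * |z.im|) : t / (1 - t) ≤ 2 * (chiKernel z t).re := by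
  have h1 := sub_pos.2 ht1
  have hD := normSq_one_sub_add_mul_pos ht0 ht1 hz
  have hN : (1 - t) ^ 2 ≤ t ^ 2 * normSq z := by
    rw [normSq_apply]
    nlinarith [mul_self_le_mul_self h1.le htb, sq_abs z.im, sq_nonneg (t * z.re)]
  have key : normSq (1 - t + t * z) ≤ 2 * ((1 - t) * z.re + t * normSq z) := by
    rw [normSq_one_sub_add_mul]
    rw [normSq_apply] at hN ⊢
    nlinarith [mul_nonneg (mul_nonneg ht0 h1.le) hz, mul_nonneg (mul_nonneg ht0 ht0) (sq_nonneg z.re),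
      mul_nonneg (mul_nonneg ht0 h1.le) (add_nonneg (sq_nonneg z.re) (sq_nonneg z.im))]
  rw [chiKernel_re ht0 ht1 hz, mul_div_assoc', div_le_div_iff₀ h1 (mul_pos h1 hD)]
  nlinarith [mul_le_mul_of_nonneg_left key (mul_nonneg ht0 h1.le)]

lemma abs_chiKernel_im_le_re (ht0 : 0 ≤ t) (ht1 : t < 1) (hz : 0 ≤ z.re)
    (htb : 1 - t ≤ t * |z.im|) : |(chiKernel z t).im| ≤ (chiKernel z t).re := by
  have h1 := sub_pos.2 ht1
  have hD := normSq_one_sub_add_mul_pos ht0 ht1 hz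
  have key : (1 - t) * |z.im| ≤ (1 - t) * z.re + t * normSq z := by
    rw [normSq_apply]
    nlinarith [mul_le_mul_of_nonneg_right htb (abs_nonneg z.im), sq_abs z.im,
      mul_nonneg h1.le hz, mul_nonneg ht0 (sq_nonneg z.re)]
  rw [chiKernel_im, chiKernel_re ht0 ht1 hz, abs_div, abs_mul, abs_of_nonneg ht0,
    abs_of_nonneg (normSq_nonneg _), div_le_div_iff₀ hD (mul_pos h1 hD)]
  nlinarith [mul_le_mul_of_nonneg_left key (mul_nonneg ht0 hD.le)]

end Pointwise

section Integral

open Complex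

variable {μ : Measure ℝ} {z : ℂ}

lemma integrable_inv_one_sub_add_mul (hμ : ∀ᵐ t ∂μ, t ∈ Ico (0 : ℝ) 1)
    (hint : Integrable (fun t : ℝ => (1 - t)⁻¹) μ) (hz : 0 ≤ z.re) :
    Integrable (fun t : ℝ => ((1 : ℂ) - t + t * z)⁻¹) μ := by
  refine hint.mono' (by fun_prop) ?_
  filter_upwards [hμ] with t ⟨ht0, ht1⟩
  have hre : 1 - t ≤ ((1 : ℂ) - t + t * z).re := by
    simpa using mul_nonneg ht0 hz
  rw [norm_inv]
  exact inv_anti₀ (sub_pos.2 ht1) (hre.trans (re_le_norm _))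

lemma integrable_chiKernel (hμ : ∀ᵐ t ∂μ, t ∈ Ico (0 : ℝ) 1)
    (hint : Integrable (fun t : ℝ => (1 - t)⁻¹) μ) (hz : 0 ≤ z.re) :
    Integrable (chiKernel z) μ :=
  hint.ofReal.sub (integrable_inv_one_sub_add_mul hμ hint hz)

lemma integral_chiKernel (hμ : ∀ᵐ t ∂μ, t ∈ Ico (0 : ℝ) 1)
    (hint : Integrable (fun t : ℝ => (1 - t)⁻¹) μ) (hz : 0 ≤ z.re) :
    ∫ t, chiKernel z t ∂μ =
      ((∫ t, (1 - t)⁻¹ ∂μ : ℝ) : ℂ) - ∫ t, ((1 : ℂ) - t + t * z)⁻¹ ∂μ := by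
  rw [← integral_complex_ofReal]
  exact integral_sub hint.ofReal (integrable_inv_one_sub_add_mul hμ hint hz)

lemma integral_chiKernel_re (hμ : ∀ᵐ t ∂μ, t ∈ Ico (0 : ℝ) 1)
    (hint : Integrable (fun t : ℝ => (1 - t)⁻¹) μ) (hz : 0 ≤ z.re) :
    (∫ t, chiKernel z t ∂μ).re = ∫ t, (chiKernel z t).re ∂μ :=
  (integral_re (integrable_chiKernel hμ hint hz)).symm

lemma integral_chiKernel_im (hμ : ∀ᵐ t ∂μ, t ∈ Ico (0 : ℝ) 1)
    (hint : Integrable (fun t : ℝ => (1 - t)⁻¹) μ) (hz : 0 ≤ z.re) :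
    (∫ t, chiKernel z t ∂μ).im = ∫ t, (chiKernel z t).im ∂μ :=
  (integral_im (integrable_chiKernel hμ hint hz)).symm

lemma integral_chiKernel_re_nonneg (hμ : ∀ᵐ t ∂μ, t ∈ Ico (0 : ℝ) 1) (hz : 0 ≤ z.re) :
    0 ≤ ∫ t, (chiKernel z t).re ∂μ :=
  integral_nonneg_of_ae (hμ.mono fun _ ht => chiKernel_re_nonneg ht.1 ht.2 hz)

lemma integrable_sq (hμ : ∀ᵐ t ∂μ, t ∈ Ico (0 : ℝ) 1)
    (hint : Integrable (fun t : ℝ => (1 - t)⁻¹) μ) :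
    Integrable (fun t : ℝ => t ^ 2) μ := by
  refine hint.mono' (by fun_prop) ?_
  filter_upwards [hμ] with t ⟨ht0, ht1⟩
  rw [Real.norm_of_nonneg (sq_nonneg t)]
  calc t ^ 2 ≤ 1 := pow_le_one₀ ht0 ht1.le
    _ ≤ (1 - t)⁻¹ := one_le_inv₀ (sub_pos.2 ht1) |>.2 (by linarith)

lemma integral_chiKernel_eq_zero (hμ : ∀ᵐ t ∂μ, t ∈ Ico (0 : ℝ) 1)
    (hint : Integrable (fun t : ℝ => (1 - t)⁻¹) μ) (hT : ∫ t, t ^ 2 ∂μ = 0) :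
    ∫ t, chiKernel z t ∂μ = 0 := by
  have h0 := (integral_eq_zero_iff_of_nonneg (fun t => sq_nonneg t) (integrable_sq hμ hint)).1 hT
  refine integral_eq_zero_of_ae ?_
  filter_upwards [h0] with t ht
  simp [chiKernel, pow_eq_zero_iff two_ne_zero |>.1 ht]

lemma abs_integral_chiKernel_im_le_half (hμ : ∀ᵐ t ∂μ, t ∈ Ico (0 : ℝ) 1)
    (hint : Integrable (fun t : ℝ => (1 - t)⁻¹) μ) (hz : 0 ≤ z.re) :
    |∫ t, (chiKernel z t).im ∂μ| ≤ (∫ t, (1 - t)⁻¹ ∂μ) / 2 := by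
  rw [← integral_div]
  refine abs_integral_le_integral_abs.trans
    (integral_mono_of_nonneg (.of_forall fun _ => abs_nonneg _) (hint.div_const 2) ?_)
  filter_upwards [hμ] with t ⟨ht0, ht1⟩
  exact abs_chiKernel_im_le_inv ht0 ht1 hz

lemma integral_sq_div_le_integral_chiKernel_re (hμ : ∀ᵐ t ∂μ, t ∈ Ico (0 : ℝ) 1)
    (hint : Integrable (fun t : ℝ => (1 - t)⁻¹) μ) (hz : 0 ≤ z.re) (hz2 : 1 / 4 ≤ normSq z) :
    (∫ t, t ^ 2 ∂μ) / 16 ≤ ∫ t, (chiKernel z t).re ∂μ := by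
  rw [← integral_div]
  refine integral_mono_ae ((integrable_sq hμ hint).div_const 16)
    (integrable_chiKernel hμ hint hz).re ?_
  filter_upwards [hμ] with t ⟨ht0, ht1⟩
  exact sq_div_le_chiKernel_re ht0 ht1 hz hz2

lemma integrableOn_Iic_div_one_sub_sq (hμ : ∀ᵐ t ∂μ, t ∈ Ico (0 : ℝ) 1)
    (hint : Integrable (fun t : ℝ => (1 - t)⁻¹) μ) {x : ℝ} (hx : x < 1) :
    IntegrableOn (fun t : ℝ => t / (1 - t) ^ 2) (Iic x) μ := by
  refine (hint.const_mul (1 - x)⁻¹).integrableOn.mono'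
    (by fun_prop : Measurable fun t : ℝ => t / (1 - t) ^ 2).aestronglyMeasurable ?_
  filter_upwards [ae_restrict_mem measurableSet_Iic, ae_restrict_of_ae hμ] with t htx ⟨ht0, ht1⟩
  have h1 : 0 < 1 - t := sub_pos.2 ht1
  have h1x : 1 - x ≤ 1 - t := by linarith [show t ≤ x from htx]
  have h1x0 : 0 < 1 - x := sub_pos.2 hx
  rw [Real.norm_of_nonneg (by positivity), ← mul_inv, div_le_iff₀ (by positivity),
    inv_mul_eq_div, le_div_iff₀ (by positivity)]
  nlinarith [mul_le_mul_of_nonneg_left h1x h1.le, mul_pos h1x0 h1]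

lemma setIntegral_Iic_abs_chiKernel_im_le (hμ : ∀ᵐ t ∂μ, t ∈ Ico (0 : ℝ) 1)
    (hint : Integrable (fun t : ℝ => (1 - t)⁻¹) μ) (hz : 0 ≤ z.re) {x : ℝ} (hx : x < 1) :
    ∫ t in Iic x, |(chiKernel z t).im| ∂μ ≤ |z.im| * ∫ t in Iic x, t / (1 - t) ^ 2 ∂μ := by
  rw [← integral_const_mul]
  refine integral_mono_of_nonneg (.of_forall fun _ => abs_nonneg _)
    ((integrableOn_Iic_div_one_sub_sq hμ hint hx).const_mul _) ?_
  filter_upwards [ae_restrict_of_ae hμ] with t ⟨ht0, ht1⟩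
  exact abs_chiKernel_im_le_mul ht0 ht1 hz

lemma setIntegral_Ici_div_one_sub_le (hμ : ∀ᵐ t ∂μ, t ∈ Ico (0 : ℝ) 1)
    (hint : Integrable (fun t : ℝ => (1 - t)⁻¹) μ) (hz : 0 ≤ z.re) {x : ℝ}
    (hx : 1 - x ≤ x * |z.im|) :
    ∫ t in Ici x, t / (1 - t) ∂μ ≤ 2 * ∫ t, (chiKernel z t).re ∂μ := by
  have hre := (integrable_chiKernel hμ hint hz).re
  calc ∫ t in Ici x, t / (1 - t) ∂μ ≤ ∫ t in Ici x, 2 * (chiKernel z t).re ∂μ := by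
        refine integral_mono_of_nonneg ?_ (hre.const_mul 2).integrableOn ?_
        · filter_upwards [ae_restrict_of_ae hμ] with t ⟨ht0, ht1⟩
          exact div_nonneg ht0 (sub_nonneg.2 ht1.le)
        · filter_upwards [ae_restrict_mem measurableSet_Ici, ae_restrict_of_ae hμ]
            with t htx ⟨ht0, ht1⟩
          have hxt : x ≤ t := htx
          refine div_one_sub_le_two_mul_chiKernel_re ht0 ht1 hz ?_
          nlinarith [mul_le_mul_of_nonneg_right hxt (abs_nonneg z.im)]
    _ ≤ 2 * ∫ t, (chiKernel z t).re ∂μ := by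
        rw [integral_const_mul]
        exact mul_le_mul_of_nonneg_left (setIntegral_le_integral hre
          (hμ.mono fun _ ht => chiKernel_re_nonneg ht.1 ht.2 hz)) zero_le_two

lemma setIntegral_Ioi_abs_chiKernel_im_le (hμ : ∀ᵐ t ∂μ, t ∈ Ico (0 : ℝ) 1)
    (hint : Integrable (fun t : ℝ => (1 - t)⁻¹) μ) (hz : 0 ≤ z.re) {x : ℝ}
    (hx : 1 - x ≤ x * |z.im|) :
    ∫ t in Ioi x, |(chiKernel z t).im| ∂μ ≤ ∫ t, (chiKernel z t).re ∂μ := by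
  have hre := (integrable_chiKernel hμ hint hz).re
  calc ∫ t in Ioi x, |(chiKernel z t).im| ∂μ ≤ ∫ t in Ioi x, (chiKernel z t).re ∂μ := by
        refine integral_mono_of_nonneg (.of_forall fun _ => abs_nonneg _) hre.integrableOn ?_
        filter_upwards [ae_restrict_mem measurableSet_Ioi, ae_restrict_of_ae hμ]
          with t htx ⟨ht0, ht1⟩
        have hxt : x ≤ t := le_of_lt htx
        refine abs_chiKernel_im_le_re ht0 ht1 hz ?_
        nlinarith [mul_le_mul_of_nonneg_right hxt (abs_nonneg z.im)]
    _ ≤ ∫ t, (chiKernel z t).re ∂μ :=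
        setIntegral_le_integral hre (hμ.mono fun _ ht => chiKernel_re_nonneg ht.1 ht.2 hz)

lemma abs_integral_chiKernel_im_le {L : ℝ} (hμ : ∀ᵐ t ∂μ, t ∈ Ico (0 : ℝ) 1)
    (hint : Integrable (fun t : ℝ => (1 - t)⁻¹) μ) (hL : 0 ≤ L)
    (hcond : ∀ x ∈ Ico (0 : ℝ) 1,
      ∫ t in Iic x, t / (1 - t) ^ 2 ∂μ ≤ (L / (1 - x)) * ∫ t in Ici x, t / (1 - t) ∂μ)
    (hz : 0 ≤ z.re) :
    |∫ t, (chiKernel z t).im ∂μ| ≤ (2 * L * (1 + |z.im|) + 1) * ∫ t, (chiKernel z t).re ∂μ := by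
  have hRe := integral_chiKernel_re_nonneg hμ hz
  rcases eq_or_ne z.im 0 with hb | hb
  · simp only [chiKernel_im, hb, mul_zero, zero_div, integral_zero, abs_zero]
    positivity
  have hb0 : 0 < |z.im| := abs_pos.2 hb
  set x := (1 + |z.im|)⁻¹ with hx
  have hx1 : 1 - x = x * |z.im| := by rw [hx]; field_simp; ring
  have hxI : x ∈ Ico (0 : ℝ) 1 := ⟨by positivity, inv_lt_one_of_one_lt₀ (by linarith)⟩
  have hfac : |z.im| * (L / (1 - x)) = L * (1 + |z.im|) := by
    rw [hx1, hx]; field_simp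
  have himint := (integrable_chiKernel hμ hint hz).im.abs
  calc |∫ t, (chiKernel z t).im ∂μ| ≤ ∫ t, |(chiKernel z t).im| ∂μ :=
        abs_integral_le_integral_abs
    _ = ∫ t in Iic x, |(chiKernel z t).im| ∂μ + ∫ t in Ioi x, |(chiKernel z t).im| ∂μ := by
        rw [← compl_Iic]
        exact (integral_add_compl measurableSet_Iic himint).symm
    _ ≤ |z.im| * ((L / (1 - x)) * ∫ t in Ici x, t / (1 - t) ∂μ) +
          ∫ t, (chiKernel z t).re ∂μ := by
        gcongr
        · exact (setIntegral_Iic_abs_chiKernel_im_le hμ hint hz hxI.2).trans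
            (mul_le_mul_of_nonneg_left (hcond x hxI) hb0.le)
        · exact setIntegral_Ioi_abs_chiKernel_im_le hμ hint hz hx1.le
    _ ≤ L * (1 + |z.im|) * (2 * ∫ t, (chiKernel z t).re ∂μ) + ∫ t, (chiKernel z t).re ∂μ := by
        rw [← mul_assoc, hfac]
        gcongr
        exact setIntegral_Ici_div_one_sub_le hμ hint hz hx1.le
    _ = (2 * L * (1 + |z.im|) + 1) * ∫ t, (chiKernel z t).re ∂μ := by ring

theorem exists_abs_im_integral_chiKernel_le {L : ℝ} (hμ : ∀ᵐ t ∂μ, t ∈ Ico (0 : ℝ) 1)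
    (hint : Integrable (fun t : ℝ => (1 - t)⁻¹) μ) (hL : 0 ≤ L)
    (hcond : ∀ x ∈ Ico (0 : ℝ) 1,
      ∫ t in Iic x, t / (1 - t) ^ 2 ∂μ ≤ (L / (1 - x)) * ∫ t in Ici x, t / (1 - t) ∂μ) :
    ∃ C : ℝ, 0 < C ∧ ∀ z : ℂ, 0 ≤ z.re →
      |(∫ t, chiKernel z t ∂μ).im| ≤ C * (∫ t, chiKernel z t ∂μ).re := by
  set T := ∫ t, t ^ 2 ∂μ
  set I := ∫ t, (1 - t)⁻¹ ∂μ
  have hT0 : 0 ≤ T := integral_nonneg fun t => sq_nonneg t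
  rcases hT0.eq_or_lt with hT | hT
  · exact ⟨1, one_pos, fun z _ => by simp [integral_chiKernel_eq_zero hμ hint hT.symm]⟩
  have hI : 0 ≤ I := integral_nonneg_of_ae
    (hμ.mono fun t ht => inv_nonneg.2 (sub_nonneg.2 ht.2.le))
  refine ⟨max (3 * L + 1) (8 * I / T), by positivity, fun z hz => ?_⟩
  rw [integral_chiKernel_re hμ hint hz, integral_chiKernel_im hμ hint hz]
  have hRe := integral_chiKernel_re_nonneg hμ hz
  rcases le_or_gt |z.im| (1 / 2) with hb | hb
  · calc _ ≤ (2 * L * (1 + |z.im|) + 1) * ∫ t, (chiKernel z t).re ∂μ :=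
          abs_integral_chiKernel_im_le hμ hint hL hcond hz
      _ ≤ max (3 * L + 1) (8 * I / T) * ∫ t, (chiKernel z t).re ∂μ := by
          gcongr
          exact le_max_of_le_left (by nlinarith)
  · have hz2 : 1 / 4 ≤ normSq z := by
      rw [normSq_apply]
      nlinarith [sq_abs z.im, mul_self_nonneg z.re]
    calc _ ≤ I / 2 := abs_integral_chiKernel_im_le_half hμ hint hz
      _ = 8 * I / T * (T / 16) := by field_simp; ring
      _ ≤ max (3 * L + 1) (8 * I / T) * ∫ t, (chiKernel z t).re ∂μ := by
          gcongr
          · exact le_max_right _ _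
          · exact integral_sq_div_le_integral_chiKernel_re hμ hint hz hz2

end Integral

theorem chi_sectorial_general (ν : Measure ℝ) (hone : ν {1} = 0)
    (hint : IntegrableOn (fun t : ℝ => (1 - t)⁻¹) (Icc 0 1) ν)
    (L : ℝ) (hL : 0 < L)
    (hcond : ∀ x ∈ Ico (0 : ℝ) 1,
      ∫ t in Icc (0 : ℝ) x, t / (1 - t) ^ 2 ∂ν ≤
        (L / (1 - x)) * ∫ t in Icc x 1, t / (1 - t) ∂ν)
    (χ : ℂ → ℂ)
    (hχ : ∀ z : ℂ, χ z =
      ((∫ t in Icc (0 : ℝ) 1, (1 - t)⁻¹ ∂ν : ℝ) : ℂ) -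
        ∫ t in Icc (0 : ℝ) 1, ((1 : ℂ) - (t : ℂ) + (t : ℂ) * z)⁻¹ ∂ν) :
    ∃ C : ℝ, 0 < C ∧ ∀ z : ℂ, 0 ≤ z.re → |(χ z).im| ≤ C * (χ z).re := by
  have hμ : ∀ᵐ t ∂ν.restrict (Icc 0 1), t ∈ Ico (0 : ℝ) 1 := by
    filter_upwards [ae_restrict_mem measurableSet_Icc,
      ae_restrict_of_ae (measure_eq_zero_iff_ae_notMem.1 hone)] with t ht ht1
    exact ⟨ht.1, ht.2.lt_of_ne ht1⟩
  have hcond' : ∀ x ∈ Ico (0 : ℝ) 1,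
      ∫ t in Iic x, t / (1 - t) ^ 2 ∂ν.restrict (Icc 0 1) ≤
        (L / (1 - x)) * ∫ t in Ici x, t / (1 - t) ∂ν.restrict (Icc 0 1) := by
    intro x hx
    have hIic : Iic x ∩ Icc 0 1 = Icc 0 x := by
      ext t; simp only [mem_inter_iff, mem_Iic, mem_Icc]; grind
    have hIci : Ici x ∩ Icc 0 1 = Icc x 1 := by
      ext t; simp only [mem_inter_iff, mem_Ici, mem_Icc]; grind
    rw [Measure.restrict_restrict measurableSet_Iic, Measure.restrict_restrict measurableSet_Ici,
      hIic, hIci]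
    exact hcond x hx
  obtain ⟨C, hC, hsector⟩ := exists_abs_im_integral_chiKernel_le hμ hint hL.le hcond'
  refine ⟨C, hC, fun z hz => ?_⟩
  rw [hχ, ← integral_chiKernel hμ hint hz]
  exact hsector z hz

/-- The complete Bernstein function `χ` associated with a CM probability
measure maps the closed right half-plane into a sector around the positive
real axis. -/
theorem chi_sectorial (ν : Measure ℝ) [IsFiniteMeasure ν]
    (hsupp : ν (Icc (0 : ℝ) 1)ᶜ = 0) (hone : ν {1} = 0)
    (hint : IntegrableOn (fun t : ℝ => (1 - t)⁻¹) (Icc 0 1) ν)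
    (hprob : ∫ t in Icc (0 : ℝ) 1, (1 - t)⁻¹ ∂ν = 1)
    (L : ℝ) (hL : 0 < L)
    (hcond : ∀ x ∈ Ico (0 : ℝ) 1,
      ∫ t in Icc (0 : ℝ) x, t / (1 - t) ^ 2 ∂ν ≤
        (L / (1 - x)) * ∫ t in Icc x 1, t / (1 - t) ∂ν)
    (χ : ℂ → ℂ)
    (hχ : ∀ z : ℂ, χ z =
      ((∫ t in Icc (0 : ℝ) 1, (1 - t)⁻¹ ∂ν : ℝ) : ℂ) -
        ∫ t in Icc (0 : ℝ) 1, ((1 : ℂ) - (t : ℂ) + (t : ℂ) * z)⁻¹ ∂ν) :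
    ∃ C : ℝ, 0 < C ∧ ∀ z : ℂ, 0 ≤ z.re → |(χ z).im| ≤ C * (χ z).re :=
  chi_sectorial_general ν hone hint L hL hcond χ hχ
end
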